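/- Let P̃ be an affine poset of order n and T a maximal n-periodic proper tubing of P̃. If σ ∈ T is a tube with |σ| = n, then the intersection of H_τ over all τ ∈ T with τ ⊆ σ equals the intersection of H_τ over all τ ∈ T, and this intersection is a single point in ℝ^{P̃}/𝒞. -/

import Mathlib

/-- An affine poset of order `n`: a partial order `⪯` on `ℤ` with `i ⪯ i + n`,
which is `n`-periodic and strongly connected. -/
structure AffinePoset (n : ℕ) where
  le : ℤ → ℤ → Prop
  le_refl : ∀ i, le i i
  le_trans : ∀ i j k, le i j → le j k → le i k
  le_antisymm : ∀ i j, le i j → le j i → i = j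
  le_shift : ∀ i : ℤ, le i (i + n)
  periodic : ∀ i j : ℤ, le i j ↔ le (i + n) (j + n)
  strong : ∀ i j : ℤ, ∃ k : ℤ, le i (j + k * n)

namespace AffinePoset

variable {n : ℕ} (P : AffinePoset n)

def lt (i j : ℤ) : Prop := P.le i j ∧ i ≠ j

/-- The covering relation of the affine poset. -/
def covby (i j : ℤ) : Prop := P.lt i j ∧ ¬ ∃ k, P.lt i k ∧ P.lt k j

open Classical in
/-- `α_τ(x) = Σ_{i ⋖ j, i,j ∈ τ} (x j - x i)`. -/
noncomputable def alpha (τ : Finset ℤ) (x : ℤ → ℝ) : ℝ :=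
  ∑ i ∈ τ, ∑ j ∈ τ, if P.covby i j then x j - x i else 0

/-- An affine map: `x i = x (i + n) + c` with `c = n^{2(n+1)}`. -/
def IsAffineMap (_P : AffinePoset n) (x : ℤ → ℝ) : Prop :=
  ∀ i : ℤ, x i = x (i + n) + (n : ℝ) ^ (2 * (n + 1))

/-- Connectivity in the Hasse diagram of the affine poset, within `τ`. -/
def IsConnectedIn (τ : Finset ℤ) : Prop :=
  ∀ a ∈ τ, ∀ b ∈ τ, Relation.ReflTransGen
    (fun u v => u ∈ τ ∧ v ∈ τ ∧ (P.covby u v ∨ P.covby v u)) a b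

def IsConvexIn (τ : Finset ℤ) : Prop :=
  ∀ a ∈ τ, ∀ c ∈ τ, ∀ b, P.le a b → P.le b c → b ∈ τ

/-- A (proper) tube of the affine poset: connected, convex, of size at least 2,
with at most one element in each residue class modulo `n`. -/
def IsTube (τ : Finset ℤ) : Prop :=
  P.IsConnectedIn τ ∧ P.IsConvexIn τ ∧ 2 ≤ τ.card ∧
  ∀ i ∈ τ, ∀ j ∈ τ, i % (n : ℤ) = j % (n : ℤ) → i = j

/-- The relation `σ ≺ τ` on disjoint tubes. -/
def TubingRel (T : Set (Finset ℤ)) (σ τ : Finset ℤ) : Prop :=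
  σ ∈ T ∧ τ ∈ T ∧ (∀ x ∈ σ, x ∉ τ) ∧ ∃ a ∈ σ, ∃ b ∈ τ, P.lt a b

/-- An `n`-periodic proper tubing of the affine poset. -/
def IsTubing (T : Set (Finset ℤ)) : Prop :=
  (∀ τ ∈ T, P.IsTube τ) ∧
  (∀ τ ∈ T, ∀ k : ℤ, Finset.image (· + k * n) τ ∈ T) ∧
  (∀ σ ∈ T, ∀ τ ∈ T, σ ⊆ τ ∨ τ ⊆ σ ∨ ∀ x ∈ σ, x ∉ τ) ∧
  ∀ τ ∈ T, ¬ Relation.TransGen (P.TubingRel T) τ τ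

/-- A maximal `n`-periodic proper tubing. -/
def IsMaximalTubing (T : Set (Finset ℤ)) : Prop :=
  P.IsTubing T ∧ ∀ T', P.IsTubing T' → T ⊆ T' → T = T'

end AffinePoset

/-!
Since `|σ| = n` and a tube meets every residue class modulo `n` at most once, the translates
`σ + k n` tile `ℤ`, and the order can only increase the index `k`. Every tube of `T` is a
translate of a tube of `T` inside `σ`, and `α` is translation invariant on affine maps, so the
equations `α_τ = n^{2|τ|}` for `τ ⊆ σ` imply all the others.

Call the tubes of `T` and the singletons vertices. Acyclicity of `T` extends to the relation
`X ≺ Y` (disjoint, with an element of `X` below an element of `Y`) on vertices: project a cycle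
onto the maximal vertices it visits, which are pairwise disjoint, and shortcut its points. The
maximal vertices strictly inside a tube `τ ∈ T` partition it, and two of them, `B₁ ≺ B₂`, have no
vertex in between; then `B₁ ∪ B₂` is a tube whose translates can be added to `T`, so by maximality
it lies in `T` and equals `τ`. Every cover between the two halves goes from `B₁` to `B₂`.

Hence the tubes of `T` inside `σ` form a binary tree with `n` leaves, so there are `n - 1` of them,
and `α_τ` of a function that is constant on both halves of `τ` is a nonzero multiple of the
difference of the two values. The linear map `y ↦ (α_τ y)_{τ ⊆ σ}` on `ℝ^σ` thus has the constants
as kernel and is onto by counting dimensions: the point exists and is unique up to constants.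
-/

namespace AffinePoset

section order

variable {n : ℕ} (P : AffinePoset n)

lemma lt_irrefl (i : ℤ) : ¬ P.lt i i := fun h => h.2 rfl

lemma lt_of_lt_of_le {i j k : ℤ} (hij : P.lt i j) (hjk : P.le j k) : P.lt i k :=
  ⟨P.le_trans _ _ _ hij.1 hjk, by rintro rfl; exact hij.2 (P.le_antisymm _ _ hij.1 hjk)⟩

lemma lt_trans {i j k : ℤ} (hij : P.lt i j) (hjk : P.lt j k) : P.lt i k :=
  P.lt_of_lt_of_le hij hjk.1

lemma le_add_mul_iff (k i j : ℤ) : P.le (i + k * n) (j + k * n) ↔ P.le i j := by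
  induction k using Int.induction_on with
  | zero => simp
  | succ m ih =>
    rw [show i + (m + 1) * n = i + m * n + n by ring, show j + (m + 1) * n = j + m * n + n by ring,
      ← P.periodic, ih]
  | pred m ih =>
    rw [← ih, P.periodic, show i + (-m - 1) * n + n = i + -m * n by ring,
      show j + (-m - 1) * n + n = j + -m * n by ring]

lemma lt_add_mul_iff (k i j : ℤ) : P.lt (i + k * n) (j + k * n) ↔ P.lt i j := by
  simp only [lt, le_add_mul_iff, ne_eq, add_left_inj]

lemma covby_add_mul_iff (k i j : ℤ) : P.covby (i + k * n) (j + k * n) ↔ P.covby i j := by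
  have key : ∀ m, (P.lt (i + k * n) m ∧ P.lt m (j + k * n)) ↔
      (P.lt i (m - k * n) ∧ P.lt (m - k * n) j) := fun m => by
    rw [← P.lt_add_mul_iff k i, ← P.lt_add_mul_iff k _ j, sub_add_cancel]
  simp only [covby, lt_add_mul_iff, key]
  refine and_congr_right fun _ => not_congr ⟨fun ⟨m, hm⟩ => ⟨_, hm⟩, fun ⟨m, hm⟩ => ⟨m + k * n, ?_⟩⟩
  rwa [add_sub_cancel_right]

lemma le_add_mul {k : ℤ} (hk : 0 ≤ k) (i : ℤ) : P.le i (i + k * n) := by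
  induction k, hk using Int.leInduction with
  | base => simpa using P.le_refl i
  | succ k _ ih =>
    rw [show i + (k + 1) * n = i + k * n + n by ring]
    exact P.le_trans _ _ _ ih (P.le_shift _)

open Classical in
noncomputable def intervalIn (τ : Finset ℤ) (p q : ℤ) : Finset ℤ :=
  τ.filter fun z => P.le p z ∧ P.le z q

variable {P} {τ : Finset ℤ} {p q m : ℤ}

lemma intervalIn_ssubset_of_lt_left (hp : p ∈ τ) (hpm : P.lt p m) (hpq : P.le p q) :
    P.intervalIn τ m q ⊂ P.intervalIn τ p q := by
  classical
  refine ⟨fun z hz => ?_, fun h => ?_⟩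
  · simp only [intervalIn, Finset.mem_filter] at hz ⊢
    exact ⟨hz.1, P.le_trans _ _ _ hpm.1 hz.2.1, hz.2.2⟩
  · have := h (by simp only [intervalIn, Finset.mem_filter]; exact ⟨hp, P.le_refl p, hpq⟩)
    simp only [intervalIn, Finset.mem_filter] at this
    exact hpm.2 (P.le_antisymm _ _ hpm.1 this.2.1)

lemma intervalIn_ssubset_of_lt_right (hq : q ∈ τ) (hmq : P.lt m q) (hpq : P.le p q) :
    P.intervalIn τ p m ⊂ P.intervalIn τ p q := by
  classical
  refine ⟨fun z hz => ?_, fun h => ?_⟩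
  · simp only [intervalIn, Finset.mem_filter] at hz ⊢
    exact ⟨hz.1, hz.2.1, P.le_trans _ _ _ hz.2.2 hmq.1⟩
  · have := h (by simp only [intervalIn, Finset.mem_filter]; exact ⟨hq, hpq, P.le_refl q⟩)
    simp only [intervalIn, Finset.mem_filter] at this
    exact hmq.2 (P.le_antisymm _ _ hmq.1 this.2.2)

lemma IsConnectedIn.union {X Y : Finset ℤ} (hX : P.IsConnectedIn X) (hY : P.IsConnectedIn Y)
    {u v : ℤ} (hu : u ∈ X) (hv : v ∈ Y) (huv : P.covby u v) : P.IsConnectedIn (X ∪ Y) := by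
  have lift : ∀ {Z}, Z ⊆ X ∪ Y → P.IsConnectedIn Z → ∀ a ∈ Z, ∀ b ∈ Z, Relation.ReflTransGen
      (fun u v => u ∈ X ∪ Y ∧ v ∈ X ∪ Y ∧ (P.covby u v ∨ P.covby v u)) a b :=
    fun hZ h a ha b hb => Relation.ReflTransGen.mono (fun _ _ h => ⟨hZ h.1, hZ h.2.1, h.2.2⟩) _ _
      (h a ha b hb)
  have hXu := lift Finset.subset_union_left hX
  have hYu := lift Finset.subset_union_right hY
  have huv' : Relation.ReflTransGen
      (fun u v => u ∈ X ∪ Y ∧ v ∈ X ∪ Y ∧ (P.covby u v ∨ P.covby v u)) u v :=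
    .single ⟨Finset.mem_union_left _ hu, Finset.mem_union_right _ hv, Or.inl huv⟩
  have hvu : Relation.ReflTransGen
      (fun u v => u ∈ X ∪ Y ∧ v ∈ X ∪ Y ∧ (P.covby u v ∨ P.covby v u)) v u :=
    .single ⟨Finset.mem_union_right _ hv, Finset.mem_union_left _ hu, Or.inr huv⟩
  intro a ha b hb
  rcases Finset.mem_union.1 ha with ha | ha <;> rcases Finset.mem_union.1 hb with hb | hb
  · exact hXu a ha b hb
  · exact ((hXu a ha u hu).trans huv').trans (hYu v hv b hb)
  · exact ((hYu a ha v hv).trans hvu).trans (hXu u hu b hb)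
  · exact hYu a ha b hb

end order

def shift (n : ℕ) (k : ℤ) (τ : Finset ℤ) : Finset ℤ := τ.image (· + k * n)

section shift

variable {n : ℕ} {P : AffinePoset n} {k l : ℤ} {τ ρ : Finset ℤ}

lemma shift_injective (k : ℤ) : Function.Injective (· + k * (n : ℤ)) := add_left_injective _

lemma mem_shift {x : ℤ} : x ∈ shift n k τ ↔ x - k * n ∈ τ := by
  simp only [shift, Finset.mem_image]
  exact ⟨by rintro ⟨a, ha, rfl⟩; simpa using ha, fun h => ⟨_, h, sub_add_cancel _ _⟩⟩

lemma add_mem_shift {a : ℤ} (ha : a ∈ τ) : a + k * n ∈ shift n k τ :=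
  Finset.mem_image_of_mem _ ha

@[simp] lemma shift_zero : shift n 0 τ = τ := by simp [shift]

lemma shift_shift : shift n k (shift n l τ) = shift n (k + l) τ := by
  ext x; simp only [mem_shift, sub_sub, ← add_mul]

@[simp] lemma shift_shift_neg : shift n k (shift n (-k) τ) = τ := by simp [shift_shift]

@[simp] lemma shift_neg_shift : shift n (-k) (shift n k τ) = τ := by simp [shift_shift]

@[simp] lemma card_shift : (shift n k τ).card = τ.card :=
  Finset.card_image_of_injective _ (shift_injective k)

@[simp] lemma shift_subset_shift : shift n k τ ⊆ shift n k ρ ↔ τ ⊆ ρ :=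
  Finset.image_subset_image_iff (shift_injective k)

@[simp] lemma disjoint_shift : Disjoint (shift n k τ) (shift n k ρ) ↔ Disjoint τ ρ :=
  Finset.disjoint_image (shift_injective k)

lemma IsTube.shift (k : ℤ) (h : P.IsTube τ) : P.IsTube (shift n k τ) := by
  obtain ⟨hconn, hconv, hcard, hres⟩ := h
  refine ⟨?_, ?_, by rwa [card_shift], ?_⟩
  · intro a ha b hb
    rw [mem_shift] at ha hb
    simpa [Function.onFun] using Relation.ReflTransGen.lift (· + k * (n : ℤ))
      (fun u v ⟨hu, hv, huv⟩ => ⟨add_mem_shift hu, add_mem_shift hv,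
        huv.imp (P.covby_add_mul_iff k u v).2 (P.covby_add_mul_iff k v u).2⟩) _ _
      (hconn _ ha _ hb)
  · intro a ha c hc b hab hbc
    rw [mem_shift] at ha hc ⊢
    refine hconv _ ha _ hc _ ?_ ?_
    · rwa [← P.le_add_mul_iff k, sub_add_cancel, sub_add_cancel]
    · rwa [← P.le_add_mul_iff k, sub_add_cancel, sub_add_cancel]
  · intro i hi j hj hij
    rw [mem_shift] at hi hj
    have := hres _ hi _ hj (by simp [Int.sub_emod, hij])
    omega

lemma tubingRel_shift {T : Set (Finset ℤ)} (hT : ∀ ρ ∈ T, ∀ k, shift n k ρ ∈ T) (k : ℤ)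
    {X Y : Finset ℤ} (h : P.TubingRel T X Y) : P.TubingRel T (shift n k X) (shift n k Y) := by
  obtain ⟨hX, hY, hdisj, a, ha, b, hb, hab⟩ := h
  refine ⟨hT X hX k, hT Y hY k, fun x hx hx' => ?_, a + k * n, add_mem_shift ha, b + k * n,
    add_mem_shift hb, (P.lt_add_mul_iff k a b).2 hab⟩
  rw [mem_shift] at hx hx'
  exact hdisj _ hx hx'

lemma transGen_tubingRel_shift {T : Set (Finset ℤ)} (hT : ∀ ρ ∈ T, ∀ k, shift n k ρ ∈ T)
    (k : ℤ) {X Y : Finset ℤ} (h : Relation.TransGen (P.TubingRel T) X Y) :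
    Relation.TransGen (P.TubingRel T) (shift n k X) (shift n k Y) :=
  Relation.TransGen.lift (shift n k) (fun _ _ h => tubingRel_shift hT k h) _ _ h

end shift

section alpha

variable {n : ℕ} (P : AffinePoset n) (τ : Finset ℤ) (x y : ℤ → ℝ)

lemma alpha_add : P.alpha τ (fun i => x i + y i) = P.alpha τ x + P.alpha τ y := by
  simp only [alpha, ← Finset.sum_add_distrib]
  refine Finset.sum_congr rfl fun i _ => Finset.sum_congr rfl fun j _ => ?_
  split_ifs <;> ring

lemma alpha_smul (c : ℝ) : P.alpha τ (fun i => c * x i) = c * P.alpha τ x := by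
  simp only [alpha, Finset.mul_sum]
  refine Finset.sum_congr rfl fun i _ => Finset.sum_congr rfl fun j _ => ?_
  split_ifs <;> ring

lemma alpha_sub : P.alpha τ (fun i => x i - y i) = P.alpha τ x - P.alpha τ y := by
  rw [eq_sub_iff_add_eq, ← alpha_add]
  simp only [sub_add_cancel]

noncomputable def alphaLinear : (ℤ → ℝ) →ₗ[ℝ] ℝ where
  toFun := P.alpha τ
  map_add' x y := P.alpha_add τ x y
  map_smul' c x := P.alpha_smul τ x c

variable {P x}

lemma apply_add_mul_of_apply_add {t : ℝ} (hx : ∀ i, x (i + n) = x i - t) (k i : ℤ) :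
    x (i + k * n) = x i - k * t := by
  induction k using Int.induction_on with
  | zero => simp
  | succ m ih =>
    rw [show i + (m + 1) * n = i + m * n + n by ring, hx, ih]
    push_cast; ring
  | pred m ih =>
    have := hx (i + (-m - 1) * n)
    rw [show i + (-m - 1) * n + n = i + -m * n by ring, ih] at this
    push_cast at this ⊢; linarith

lemma alpha_shift {t : ℝ} (hx : ∀ i, x (i + n) = x i - t) (k : ℤ) :
    P.alpha (shift n k τ) x = P.alpha τ x := by
  have hinj : Set.InjOn (· + k * (n : ℤ)) τ := (shift_injective k).injOn
  simp only [alpha, shift, Finset.sum_image hinj, apply_add_mul_of_apply_add hx]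
  refine Finset.sum_congr rfl fun i _ => Finset.sum_congr rfl fun j _ => ?_
  simp only [sub_sub_sub_cancel_right]
  classical exact if_congr (P.covby_add_mul_iff k i j) rfl rfl

lemma IsAffineMap.apply_add (hx : P.IsAffineMap x) (i : ℤ) :
    x (i + n) = x i - (n : ℝ) ^ (2 * (n + 1)) := by
  linarith [hx i]

variable (P)

open Classical in
noncomputable def numCovers (B₁ B₂ : Finset ℤ) : ℕ :=
  ((B₁ ×ˢ B₂).filter fun ij => P.covby ij.1 ij.2).card

variable {P}

lemma numCovers_pos {B₁ B₂ : Finset ℤ} (h : ∃ p ∈ B₁, ∃ q ∈ B₂, P.covby p q) :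
    0 < P.numCovers B₁ B₂ := by
  obtain ⟨p, hp, q, hq, hpq⟩ := h
  classical
  exact Finset.card_pos.2 ⟨(p, q), Finset.mem_filter.2 ⟨Finset.mem_product.2 ⟨hp, hq⟩, hpq⟩⟩

lemma alpha_union_of_const {B₁ B₂ : Finset ℤ} (hdisj : Disjoint B₁ B₂)
    (h₂₁ : ∀ i ∈ B₂, ∀ j ∈ B₁, ¬ P.covby i j) {c₁ c₂ : ℝ}
    (h₁ : ∀ i ∈ B₁, x i = c₁) (h₂ : ∀ i ∈ B₂, x i = c₂) :
    P.alpha (B₁ ∪ B₂) x = P.numCovers B₁ B₂ * (c₂ - c₁) := by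
  classical
  have hx : ∀ i ∈ B₁ ∪ B₂, ∀ j ∈ B₁ ∪ B₂, (if P.covby i j then x j - x i else 0) =
      if (i, j) ∈ (B₁ ×ˢ B₂).filter fun ij => P.covby ij.1 ij.2 then c₂ - c₁ else 0 := by
    intro i hi j hj
    simp only [Finset.mem_filter, Finset.mem_product]
    rcases Finset.mem_union.1 hi with hi | hi <;> rcases Finset.mem_union.1 hj with hj | hj
    · simp [h₁ i hi, h₁ j hj, Finset.disjoint_left.1 hdisj hj]
    · simp [h₁ i hi, h₂ j hj, hi, hj]
    · simp [h₂₁ i hi j hj, Finset.disjoint_right.1 hdisj hi]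
    · simp [h₂ i hi, h₂ j hj, Finset.disjoint_right.1 hdisj hi]
  rw [alpha, Finset.sum_congr rfl fun i hi => Finset.sum_congr rfl (hx i hi),
    ← Finset.sum_product' (f := fun i j => if (i, j) ∈ _ then c₂ - c₁ else 0),
    Finset.sum_ite_mem, Finset.sum_const, nsmul_eq_mul, numCovers]
  congr 3
  exact Finset.inter_eq_right.2 (Finset.filter_subset_filter _ (Finset.product_subset_product
    Finset.subset_union_left Finset.subset_union_right) |>.trans (Finset.filter_subset _ _))

end alpha

variable {n : ℕ}

structure TubingWithBase (P : AffinePoset n) where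
  T : Set (Finset ℤ)
  σ : Finset ℤ
  isTubing : P.IsTubing T
  σ_mem : σ ∈ T
  card_σ : σ.card = n

namespace TubingWithBase

variable {P : AffinePoset n}

section basic

variable (C : P.TubingWithBase) {τ ρ : Finset ℤ}

lemma isTube (h : τ ∈ C.T) : P.IsTube τ := C.isTubing.1 τ h

lemma shift_mem (h : τ ∈ C.T) (k : ℤ) : shift n k τ ∈ C.T := C.isTubing.2.1 τ h k

lemma laminar (hτ : τ ∈ C.T) (hρ : ρ ∈ C.T) : τ ⊆ ρ ∨ ρ ⊆ τ ∨ Disjoint τ ρ := by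
  rw [Finset.disjoint_left]; exact C.isTubing.2.2.1 τ hτ ρ hρ

lemma not_transGen_self (h : τ ∈ C.T) : ¬ Relation.TransGen (P.TubingRel C.T) τ τ :=
  C.isTubing.2.2.2 τ h

lemma one_lt_card (h : τ ∈ C.T) : 1 < τ.card := (C.isTube h).2.2.1

lemma nonempty_of_mem (h : τ ∈ C.T) : τ.Nonempty :=
  Finset.card_pos.1 (by linarith [C.one_lt_card h])

lemma ne_singleton_of_mem (h : τ ∈ C.T) (a : ℤ) : τ ≠ {a} := by
  rintro rfl; simpa using C.one_lt_card h

lemma pos (C : P.TubingWithBase) : 0 < n := by linarith [C.card_σ ▸ C.one_lt_card C.σ_mem]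

lemma card_image_emod (h : τ ∈ C.T) : (τ.image (· % (n : ℤ))).card = τ.card :=
  Finset.card_image_of_injOn fun i hi j hj hij => (C.isTube h).2.2.2 i hi j hj hij

lemma image_emod_subset (C : P.TubingWithBase) (τ : Finset ℤ) :
    τ.image (· % (n : ℤ)) ⊆ Finset.Ico 0 (n : ℤ) := by
  intro x hx
  obtain ⟨a, _, rfl⟩ := Finset.mem_image.1 hx
  have : (0 : ℤ) < n := by exact_mod_cast C.pos
  exact Finset.mem_Ico.2 ⟨Int.emod_nonneg a this.ne', Int.emod_lt_of_pos a this⟩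

lemma card_le (h : τ ∈ C.T) : τ.card ≤ n := by
  simpa [← C.card_image_emod h] using Finset.card_le_card (C.image_emod_subset τ)

lemma exists_mem_σ_add_mul (i : ℤ) : ∃ s ∈ C.σ, ∃ k : ℤ, i = s + k * n := by
  have himg : C.σ.image (· % (n : ℤ)) = Finset.Ico 0 (n : ℤ) :=
    Finset.eq_of_subset_of_card_le (C.image_emod_subset _) (by simp [C.card_image_emod C.σ_mem,
      C.card_σ])
  have hi : i % (n : ℤ) ∈ C.σ.image (· % (n : ℤ)) := himg ▸ C.image_emod_subset {i} (by simp)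
  obtain ⟨s, hs, hmod⟩ := Finset.mem_image.1 hi
  obtain ⟨k, hk⟩ := Int.ModEq.dvd (n := n) hmod
  exact ⟨s, hs, k, by linarith⟩

lemma eq_of_add_mul_eq {s s' k k' : ℤ} (hs : s ∈ C.σ) (hs' : s' ∈ C.σ)
    (h : s + k * n = s' + k' * n) : s = s' ∧ k = k' := by
  have hss' : s = s' := (C.isTube C.σ_mem).2.2.2 s hs s' hs' (by
    rw [← Int.add_mul_emod_self_right s k, h, Int.add_mul_emod_self_right])
  subst hss'
  exact ⟨rfl, mul_right_cancel₀ (b := (n : ℤ)) (by exact_mod_cast C.pos.ne') (by linarith)⟩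

noncomputable def base (i : ℤ) : ℤ := (C.exists_mem_σ_add_mul i).choose

noncomputable def level (i : ℤ) : ℤ := (C.exists_mem_σ_add_mul i).choose_spec.2.choose

lemma base_mem (i : ℤ) : C.base i ∈ C.σ := (C.exists_mem_σ_add_mul i).choose_spec.1

lemma base_add_level (i : ℤ) : C.base i + C.level i * n = i :=
  (C.exists_mem_σ_add_mul i).choose_spec.2.choose_spec.symm

lemma base_eq_and_level_eq {i s k : ℤ} (hs : s ∈ C.σ) (h : s + k * n = i) :
    C.base i = s ∧ C.level i = k :=
  C.eq_of_add_mul_eq (C.base_mem i) hs (by rw [C.base_add_level, h])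

lemma base_eq_and_level_eq_of_mem {s : ℤ} (hs : s ∈ C.σ) : C.base s = s ∧ C.level s = 0 :=
  C.base_eq_and_level_eq hs (by simp)

lemma base_add_mul (i k : ℤ) : C.base (i + k * n) = C.base i :=
  (C.base_eq_and_level_eq (k := C.level i + k) (C.base_mem i)
    (by linear_combination C.base_add_level i)).1

lemma level_add_mul (i k : ℤ) : C.level (i + k * n) = C.level i + k :=
  (C.base_eq_and_level_eq (k := C.level i + k) (C.base_mem i)
    (by linear_combination C.base_add_level i)).2

lemma mem_shift_σ {i k : ℤ} : i ∈ shift n k C.σ ↔ C.level i = k := by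
  rw [mem_shift]
  refine ⟨fun h => (C.base_eq_and_level_eq h (by ring)).2, fun h => ?_⟩
  convert C.base_mem i using 1
  rw [← h]; linarith [C.base_add_level i]

lemma mem_shift_σ_level (i : ℤ) : i ∈ shift n (C.level i) C.σ := C.mem_shift_σ.2 rfl

lemma level_mono {a b : ℤ} (h : P.le a b) : C.level a ≤ C.level b := by
  by_contra! hlt
  -- `b + (level a - level b) n` lies in the same convex translate of `σ` as `a`, and so would `b`
  have hb : b ∈ shift n (C.level a) C.σ :=
    (C.isTube C.σ_mem).shift (C.level a) |>.2.1 a (C.mem_shift_σ_level a)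
      (b + (C.level a - C.level b) * n) (by rw [C.mem_shift_σ, level_add_mul]; ring) b h
      (P.le_add_mul (by linarith) b)
  exact hlt.ne (C.mem_shift_σ.1 hb)

lemma level_eq_of_subset {k k' : ℤ} (hρ : ρ.Nonempty) (h : ρ ⊆ shift n k C.σ)
    (h' : ρ ⊆ shift n k' C.σ) : k = k' := by
  obtain ⟨_, hx⟩ := hρ
  exact (C.mem_shift_σ.1 (h hx)).symm.trans (C.mem_shift_σ.1 (h' hx))

lemma disjoint_shift_σ {k k' : ℤ} (h : k ≠ k') : Disjoint (shift n k C.σ) (shift n k' C.σ) :=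
  Finset.disjoint_left.2 fun _ hx hx' => h ((C.mem_shift_σ.1 hx).symm.trans (C.mem_shift_σ.1 hx'))

lemma exists_eq_shift_of_mem (h : τ ∈ C.T) : ∃ τ₀ ∈ C.T, τ₀ ⊆ C.σ ∧ ∃ k, τ = shift n k τ₀ := by
  obtain ⟨a, ha⟩ := C.nonempty_of_mem h
  set k := C.level a
  rcases C.laminar h (C.shift_mem C.σ_mem k) with hsub | hsup | hdisj
  · have h₀ := (shift_subset_shift (n := n) (k := -k)).2 hsub
    rw [shift_neg_shift] at h₀
    exact ⟨shift n (-k) τ, C.shift_mem h (-k), h₀, k, by simp⟩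
  · refine ⟨C.σ, C.σ_mem, subset_rfl, k, (Finset.eq_of_subset_of_card_le hsup ?_).symm⟩
    rw [card_shift, C.card_σ]; exact C.card_le h
  · exact absurd (C.mem_shift_σ_level a) (Finset.disjoint_left.1 hdisj ha)

lemma exists_subset_shift_σ (h : τ ∈ C.T) : ∃ k, τ ⊆ shift n k C.σ := by
  obtain ⟨τ₀, -, hτ₀, k, rfl⟩ := C.exists_eq_shift_of_mem h
  exact ⟨k, shift_subset_shift.2 hτ₀⟩

lemma alpha_eq_of_forall_subset_σ {x : ℤ → ℝ} (hx : P.IsAffineMap x)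
    (h : ∀ τ ∈ C.T, τ ⊆ C.σ → P.alpha τ x = (n : ℝ) ^ (2 * τ.card)) :
    ∀ τ ∈ C.T, P.alpha τ x = (n : ℝ) ^ (2 * τ.card) := by
  intro τ hτ
  obtain ⟨τ₀, hτ₀T, hτ₀σ, k, rfl⟩ := C.exists_eq_shift_of_mem hτ
  rw [alpha_shift τ₀ hx.apply_add k, card_shift]
  exact h τ₀ hτ₀T hτ₀σ

lemma level_le_of_reflTransGen {R : Finset ℤ → Finset ℤ → Prop}
    (hR : ∀ X Y, R X Y → (∃ k, X ⊆ shift n k C.σ) ∧ ∃ a ∈ X, ∃ b ∈ Y, P.lt a b)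
    (h : Relation.ReflTransGen R X Y) (hX : X.Nonempty) {k k' : ℤ} (hXk : X ⊆ shift n k C.σ)
    (hYk : Y ⊆ shift n k' C.σ) : k ≤ k' := by
  induction h generalizing k' with
  | refl => exact (C.level_eq_of_subset hX hXk hYk).le
  | @tail V W _ hVW ih =>
    obtain ⟨⟨kV, hV⟩, a, ha, b, hb, hab⟩ := hR V W hVW
    have := C.level_mono hab.1
    rw [C.mem_shift_σ.1 (hV ha), C.mem_shift_σ.1 (hYk hb)] at this
    exact (ih hV).trans this

lemma level_le_of_transGen {R : Finset ℤ → Finset ℤ → Prop}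
    (hR : ∀ X Y, R X Y → (∃ k, X ⊆ shift n k C.σ) ∧ ∃ a ∈ X, ∃ b ∈ Y, P.lt a b)
    (h : Relation.TransGen R X Y) {k k' : ℤ} (hXk : X ⊆ shift n k C.σ)
    (hYk : Y ⊆ shift n k' C.σ) : k ≤ k' := by
  obtain ⟨W, hXW, -⟩ := Relation.TransGen.head'_iff.1 h
  obtain ⟨-, a, ha, -⟩ := hR X W hXW
  exact C.level_le_of_reflTransGen hR h.to_reflTransGen ⟨a, ha⟩ hXk hYk

end basic

section vertices

variable (C : P.TubingWithBase) {X Y Z V V' : Finset ℤ}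

def IsVertex (X : Finset ℤ) : Prop := X ∈ C.T ∨ ∃ a, X = {a}

def Precedes (X Y : Finset ℤ) : Prop :=
  C.IsVertex X ∧ C.IsVertex Y ∧ Disjoint X Y ∧ ∃ a ∈ X, ∃ b ∈ Y, P.lt a b

lemma isVertex_singleton (a : ℤ) : C.IsVertex {a} := Or.inr ⟨a, rfl⟩

variable {C}

lemma IsVertex.nonempty (h : C.IsVertex X) : X.Nonempty := by
  rcases h with h | ⟨a, rfl⟩
  exacts [C.nonempty_of_mem h, Finset.singleton_nonempty a]

lemma IsVertex.isConvexIn (h : C.IsVertex X) : P.IsConvexIn X := by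
  rcases h with h | ⟨a, rfl⟩
  · exact (C.isTube h).2.1
  · intro u hu w hw b hub hbw
    simp only [Finset.mem_singleton] at hu hw ⊢
    subst hu hw
    exact P.le_antisymm _ _ hbw hub

lemma IsVertex.laminar (hX : C.IsVertex X) (hY : C.IsVertex Y) :
    X ⊆ Y ∨ Y ⊆ X ∨ Disjoint X Y := by
  rcases hX with hX | ⟨a, rfl⟩
  · rcases hY with hY | ⟨b, rfl⟩
    · exact C.laminar hX hY
    · by_cases hb : b ∈ X
      · exact Or.inr (Or.inl (Finset.singleton_subset_iff.2 hb))
      · exact Or.inr (Or.inr (Finset.disjoint_singleton_right.2 hb))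
  · by_cases ha : a ∈ Y
    · exact Or.inl (Finset.singleton_subset_iff.2 ha)
    · exact Or.inr (Or.inr (Finset.disjoint_singleton_left.2 ha))

lemma IsVertex.exists_subset_shift_σ (h : C.IsVertex X) : ∃ k, X ⊆ shift n k C.σ := by
  rcases h with h | ⟨a, rfl⟩
  · exact C.exists_subset_shift_σ h
  · exact ⟨C.level a, Finset.singleton_subset_iff.2 (C.mem_shift_σ_level a)⟩

lemma Precedes.mono_right {Y' : Finset ℤ} (h : C.Precedes X Y) (hY' : C.IsVertex Y')
    (hYY' : Y ⊆ Y') (hXY' : Disjoint X Y') : C.Precedes X Y' :=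
  let ⟨hX, _, _, a, ha, b, hb, hab⟩ := h
  ⟨hX, hY', hXY', a, ha, b, hYY' hb, hab⟩

lemma Precedes.mono_left {X' : Finset ℤ} (h : C.Precedes X Y) (hX' : C.IsVertex X')
    (hXX' : X ⊆ X') (hX'Y : Disjoint X' Y) : C.Precedes X' Y :=
  let ⟨_, hY, _, a, ha, b, hb, hab⟩ := h
  ⟨hX', hY, hX'Y, a, hXX' ha, b, hb, hab⟩

lemma Precedes.tubingRel (h : C.Precedes X Y) (hX : X ∈ C.T) (hY : Y ∈ C.T) :
    P.TubingRel C.T X Y :=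
  let ⟨_, _, hdisj, hlt⟩ := h
  ⟨hX, hY, fun _ hx => Finset.disjoint_left.1 hdisj hx, hlt⟩

lemma isVertex_of_transGen_left (h : Relation.TransGen C.Precedes X Y) : C.IsVertex X := by
  obtain ⟨_, h, -⟩ := Relation.TransGen.head'_iff.1 h
  exact h.1

lemma isVertex_of_transGen_right (h : Relation.TransGen C.Precedes X Y) : C.IsVertex Y := by
  obtain ⟨_, -, h⟩ := Relation.TransGen.tail'_iff.1 h
  exact h.2.1

lemma level_le_of_transGen_precedes (h : Relation.TransGen C.Precedes X Y) {k k' : ℤ}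
    (hXk : X ⊆ shift n k C.σ) (hYk : Y ⊆ shift n k' C.σ) : k ≤ k' :=
  C.level_le_of_transGen (fun _ _ h => ⟨h.1.exists_subset_shift_σ, h.2.2.2⟩) h hXk hYk

variable (C)

def PrecedesOn (M : Set (Finset ℤ)) (X Y : Finset ℤ) : Prop := X ∈ M ∧ Y ∈ M ∧ C.Precedes X Y

variable {C} {M : Set (Finset ℤ)}

/-- Along a `≺`-path through pairwise disjoint vertices, a point following the last tube `Y`
visited lies above an element of `Y`; this lets the path be shortcut to a `TubingRel`-path. -/
lemma PrecedesOn.step (hM : M.PairwiseDisjoint id) (hY : Y ∈ C.T) (hYM : Y ∈ M)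
    (hYV : Y = V ∨ ∃ y ∈ Y, ∃ b, V = {b} ∧ P.lt y b) (h : C.PrecedesOn M V V') :
    (V' ∈ C.T ∧ P.TubingRel C.T Y V') ∨ ∃ y ∈ Y, ∃ b, V' = {b} ∧ P.lt y b := by
  obtain ⟨hVM, hV'M, -, hV', hdisj, a, ha, t, ht, hat⟩ := h
  obtain ⟨y, hy, hyt⟩ : ∃ y ∈ Y, P.lt y t := by
    rcases hYV with rfl | ⟨y, hy, b, rfl, hyb⟩
    · exact ⟨a, ha, hat⟩
    · rw [Finset.mem_singleton.1 ha] at hat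
      exact ⟨y, hy, P.lt_trans hyb hat⟩
  rcases hV' with hV'T | ⟨b', rfl⟩
  · refine Or.inl ⟨hV'T, Precedes.tubingRel ?_ hY hV'T⟩
    refine ⟨Or.inl hY, Or.inl hV'T, ?_, y, hy, t, ht, hyt⟩
    rcases hYV with rfl | ⟨y', hy', b, rfl, hy'b⟩
    · exact hdisj
    · refine hM hYM hV'M fun hYV' => ?_
      subst hYV'
      rw [Finset.mem_singleton.1 ha] at hat
      have hbY : b ∈ Y := (C.isTube hY).2.1 y' hy' t ht b hy'b.1 hat.1
      exact Finset.disjoint_left.1 (hM hYM hVM (C.ne_singleton_of_mem hY b)) hbY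
        (Finset.mem_singleton_self b)
  · exact Or.inr ⟨y, hy, b', rfl, by rwa [Finset.mem_singleton.1 ht] at hyt⟩

lemma not_transGen_precedesOn_of_mem (hM : M.PairwiseDisjoint id) (hZ : Z ∈ C.T) :
    ¬ Relation.TransGen (C.PrecedesOn M) Z Z := by
  have key : ∀ {V}, Relation.TransGen (C.PrecedesOn M) Z V →
      (V ∈ C.T ∧ Relation.TransGen (P.TubingRel C.T) Z V) ∨
      ∃ Y ∈ C.T, Y ∈ M ∧ Relation.ReflTransGen (P.TubingRel C.T) Z Y ∧
        ∃ y ∈ Y, ∃ b, V = {b} ∧ P.lt y b := by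
    intro V h
    induction h with
    | single h =>
      rcases PrecedesOn.step hM hZ h.1 (Or.inl rfl) h with ⟨hV, hZV⟩ | hpt
      · exact Or.inl ⟨hV, .single hZV⟩
      · exact Or.inr ⟨Z, hZ, h.1, .refl, hpt⟩
    | tail _ h ih =>
      rcases ih with ⟨hV, hZV⟩ | ⟨Y, hY, hYM, hZY, hpt⟩
      · rcases PrecedesOn.step hM hV h.1 (Or.inl rfl) h with ⟨hV', hVV'⟩ | hpt
        · exact Or.inl ⟨hV', hZV.tail hVV'⟩
        · exact Or.inr ⟨_, hV, h.1, hZV.to_reflTransGen, hpt⟩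
      · rcases PrecedesOn.step hM hY hYM (Or.inr hpt) h with ⟨hV', hYV'⟩ | hpt'
        · exact Or.inl ⟨hV', Relation.TransGen.trans_right hZY (.single hYV')⟩
        · exact Or.inr ⟨Y, hY, hYM, hZY, hpt'⟩
  intro h
  rcases key h with ⟨-, hZZ⟩ | ⟨-, -, -, -, -, -, b, rfl, -⟩
  · exact C.not_transGen_self hZ hZZ
  · exact C.ne_singleton_of_mem hZ b rfl

lemma not_transGen_precedesOn (hM : M.PairwiseDisjoint id) (X : Finset ℤ) :
    ¬ Relation.TransGen (C.PrecedesOn M) X X := by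
  intro h
  obtain ⟨_, ⟨-, -, hX, -⟩, -⟩ := Relation.TransGen.head'_iff.1 h
  rcases hX with hX | ⟨x, rfl⟩
  · exact not_transGen_precedesOn_of_mem hM hX h
  -- a cycle of points is impossible, so the cycle passes through a tube, from which we restart it
  have key : ∀ {V}, Relation.TransGen (C.PrecedesOn M) {x} V → (∃ b, V = {b} ∧ P.lt x b) ∨
      ∃ W ∈ C.T, Relation.TransGen (C.PrecedesOn M) {x} W ∧
        Relation.ReflTransGen (C.PrecedesOn M) W V := by
    intro V h
    induction h with
    | @single V h =>
      rcases h.2.2.2.1 with hV | ⟨b, rfl⟩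
      · exact Or.inr ⟨V, hV, .single h, .refl⟩
      · exact Or.inl ⟨b, rfl, by simpa using h.2.2.2.2.2⟩
    | @tail V V' hp h ih =>
      rcases ih with ⟨b, rfl, hxb⟩ | ⟨W, hW, h₁, h₂⟩
      · rcases h.2.2.2.1 with hV' | ⟨b', rfl⟩
        · exact Or.inr ⟨V', hV', hp.tail h, .refl⟩
        · exact Or.inl ⟨b', rfl, P.lt_trans hxb (by simpa using h.2.2.2.2.2)⟩
      · exact Or.inr ⟨W, hW, h₁, h₂.tail h⟩
  rcases key h with ⟨b, hb, hxb⟩ | ⟨W, hW, h₁, h₂⟩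
  · rw [Finset.singleton_inj.1 hb] at hxb
    exact P.lt_irrefl _ hxb
  · exact not_transGen_precedesOn_of_mem hM hW (Relation.TransGen.trans_right h₂ h₁)

end vertices

section cycles

variable (C : P.TubingWithBase) {X Y Y' Z : Finset ℤ}

def cycleClass (X : Finset ℤ) : Set (Finset ℤ) :=
  {Y | Relation.ReflTransGen C.Precedes X Y ∧ Relation.ReflTransGen C.Precedes Y X}

variable {C}

lemma pairwiseDisjoint_maximal {F : Set (Finset ℤ)} (hF : ∀ Y ∈ F, C.IsVertex Y) :
    {Z | Maximal (· ∈ F) Z}.PairwiseDisjoint id := by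
  intro Z hZ Z' hZ' hne
  rcases (hF Z hZ.1).laminar (hF Z' hZ'.1) with h | h | h
  · exact absurd (hZ.eq_of_le hZ'.1 h) hne
  · exact absurd (hZ'.eq_of_le hZ.1 h).symm hne
  · exact h

lemma isVertex_of_mem_cycleClass (hX : Relation.TransGen C.Precedes X X)
    (hY : Y ∈ C.cycleClass X) : C.IsVertex Y := by
  rcases hY.2.cases_head with rfl | ⟨_, hY, -⟩
  exacts [isVertex_of_transGen_left hX, hY.1]

lemma cycleClass_finite (hX : Relation.TransGen C.Precedes X X) : (C.cycleClass X).Finite := by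
  have hR : ∀ X Y, C.Precedes X Y → (∃ k, X ⊆ shift n k C.σ) ∧ ∃ a ∈ X, ∃ b ∈ Y, P.lt a b :=
    fun _ _ h => ⟨h.1.exists_subset_shift_σ, h.2.2.2⟩
  have hXv : C.IsVertex X := isVertex_of_mem_cycleClass hX ⟨.refl, .refl⟩
  obtain ⟨k, hk⟩ := hXv.exists_subset_shift_σ
  refine (Finset.finite_toSet (shift n k C.σ).powerset).subset fun Y hY => ?_
  have hYv := isVertex_of_mem_cycleClass hX hY
  obtain ⟨k', hk'⟩ := hYv.exists_subset_shift_σ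
  have : k = k' := _root_.le_antisymm (C.level_le_of_reflTransGen hR hY.1 hXv.nonempty hk hk')
    (C.level_le_of_reflTransGen hR hY.2 hYv.nonempty hk' hk)
  simpa [this] using hk'

lemma exists_maximal_reflTransGen_precedesOn (hX : Relation.TransGen C.Precedes X X)
    (h : Relation.ReflTransGen C.Precedes Y Y') (hY : Y ∈ C.cycleClass X)
    (hY' : Relation.ReflTransGen C.Precedes Y' X) (hZ : Maximal (· ∈ C.cycleClass X) Z)
    (hYZ : Y ⊆ Z) : ∃ Z', Maximal (· ∈ C.cycleClass X) Z' ∧ Y' ⊆ Z' ∧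
      Relation.ReflTransGen (C.PrecedesOn {Z | Maximal (· ∈ C.cycleClass X) Z}) Z Z' := by
  induction h using Relation.ReflTransGen.head_induction_on generalizing Z with
  | refl => exact ⟨Z, hZ, hYZ, .refl⟩
  | head hYY₁ hY₁Y' ih =>
    have hY₁ : _ ∈ C.cycleClass X := ⟨hY.1.tail hYY₁, hY₁Y'.trans hY'⟩
    obtain ⟨Z₁, hY₁Z₁, hZ₁⟩ := (cycleClass_finite hX).exists_le_maximal hY₁
    obtain ⟨Z', hZ', hY'Z', hZ₁Z'⟩ := ih hY₁ hZ₁ hY₁Z₁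
    refine ⟨Z', hZ', hY'Z', ?_⟩
    by_cases hZZ₁ : Z = Z₁
    · rwa [hZZ₁]
    have hdisj := pairwiseDisjoint_maximal (fun _ => isVertex_of_mem_cycleClass hX) hZ hZ₁ hZZ₁
    have hvert := fun {W} (hW : Maximal (· ∈ C.cycleClass X) W) =>
      isVertex_of_mem_cycleClass hX hW.1
    refine .head ⟨hZ, hZ₁, ?_⟩ hZ₁Z'
    exact (hYY₁.mono_right (hvert hZ₁) hY₁Z₁ (hdisj.mono_left hYZ)).mono_left (hvert hZ) hYZ hdisj

theorem not_transGen_precedes (X : Finset ℤ) : ¬ Relation.TransGen C.Precedes X X := by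
  intro hX
  have hfin := cycleClass_finite hX
  obtain ⟨M₀, -, hM₀⟩ := hfin.exists_le_maximal (show X ∈ C.cycleClass X from ⟨.refl, .refl⟩)
  obtain ⟨w, hM₀w, hwM₀⟩ := Relation.TransGen.head'_iff.1
    (Relation.TransGen.trans_right hM₀.1.2 (Relation.TransGen.trans_left hX hM₀.1.1))
  have hw : w ∈ C.cycleClass X := ⟨hM₀.1.1.tail hM₀w, hwM₀.trans hM₀.1.2⟩
  obtain ⟨Z, hwZ, hZ⟩ := hfin.exists_le_maximal hw
  obtain ⟨Z', hZ', hM₀Z', hZZ'⟩ :=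
    exists_maximal_reflTransGen_precedesOn hX hwM₀ hw hM₀.1.2 hZ hwZ
  rw [← hM₀.eq_of_le hZ'.1 hM₀Z'] at hZZ'
  have hM₀Z : M₀ ≠ Z := by
    rintro rfl
    obtain ⟨a, ha⟩ := hM₀w.2.1.nonempty
    exact Finset.disjoint_left.1 hM₀w.2.2.1 (hwZ ha) ha
  have hdisj := pairwiseDisjoint_maximal (fun _ => isVertex_of_mem_cycleClass hX) hM₀ hZ hM₀Z
  exact not_transGen_precedesOn (pairwiseDisjoint_maximal
    (fun _ => isVertex_of_mem_cycleClass hX)) M₀ (Relation.TransGen.trans_left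
      (.single ⟨hM₀, hZ, hM₀w.mono_right (isVertex_of_mem_cycleClass hX hZ.1) hwZ hdisj⟩) hZZ')

end cycles

section paths

variable {C : P.TubingWithBase} {X Y D : Finset ℤ}

lemma not_transGen_precedes_of_subset (h : Relation.TransGen C.Precedes X Y) (hYX : Y ⊆ X) :
    False := by
  induction h with
  | single h =>
    obtain ⟨y, hy⟩ := h.2.1.nonempty
    exact Finset.disjoint_left.1 h.2.2.1 (hYX hy) hy
  | @tail W Y hXW hWY ih =>
    obtain ⟨y, hy⟩ := hWY.2.1.nonempty
    have hX := isVertex_of_transGen_left hXW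
    rcases hWY.1.laminar hX with h | h | h
    · exact ih h
    · exact Finset.disjoint_left.1 hWY.2.2.1 (h (hYX hy)) hy
    · exact C.not_transGen_precedes X (hXW.tail (hWY.mono_right hX hYX h))

lemma not_transGen_precedes_of_superset (h : Relation.TransGen C.Precedes X Y) (hXY : X ⊆ Y) :
    False := by
  induction h using Relation.TransGen.head_induction_on with
  | single h =>
    obtain ⟨x, hx⟩ := h.1.nonempty
    exact Finset.disjoint_left.1 h.2.2.1 hx (hXY hx)
  | @head X W hXW hWY ih =>
    obtain ⟨x, hx⟩ := hXW.1.nonempty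
    have hY := isVertex_of_transGen_right hWY
    rcases hXW.2.1.laminar hY with h | h | h
    · exact ih h
    · exact Finset.disjoint_left.1 hXW.2.2.1 hx (h (hXY hx))
    · exact C.not_transGen_precedes Y (.head (hXW.mono_left hY hXY h.symm) hWY)

lemma transGen_precedes_of_subset_right (h : Relation.TransGen C.Precedes X Y)
    (hD : C.IsVertex D) (hYD : Y ⊆ D) (hXD : Disjoint X D) : Relation.TransGen C.Precedes X D := by
  induction h with
  | single h => exact .single (h.mono_right hD hYD hXD)
  | @tail W Y _ hWY ih =>
    obtain ⟨y, hy⟩ := hWY.2.1.nonempty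
    rcases hWY.1.laminar hD with h | h | h
    · exact ih h
    · exact (Finset.disjoint_left.1 hWY.2.2.1 (h (hYD hy)) hy).elim
    · exact .tail ‹_› (hWY.mono_right hD hYD h)

lemma transGen_precedes_of_subset_left (h : Relation.TransGen C.Precedes X Y)
    (hD : C.IsVertex D) (hXD : X ⊆ D) (hDY : Disjoint D Y) : Relation.TransGen C.Precedes D Y := by
  induction h using Relation.TransGen.head_induction_on with
  | single h => exact .single (h.mono_left hD hXD hDY)
  | @head X W hXW hWY ih =>
    obtain ⟨x, hx⟩ := hXW.1.nonempty
    rcases hXW.2.1.laminar hD with h | h | h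
    · exact ih h
    · exact (Finset.disjoint_left.1 hXW.2.2.1 hx (h (hXD hx))).elim
    · exact .head (hXW.mono_left hD hXD h.symm) hWY

end paths

section blocks

variable (C : P.TubingWithBase) {τ ρ D : Finset ℤ} {a b : ℤ}

def subtubesContaining (τ : Finset ℤ) (a : ℤ) : Set (Finset ℤ) := {ρ | ρ ∈ C.T ∧ ρ ⊂ τ ∧ a ∈ ρ}

lemma subtubesContaining_finite : (C.subtubesContaining τ a).Finite :=
  (Finset.finite_toSet τ.powerset).subset fun _ hρ => by simpa using hρ.2.1.subset

open Classical in
/-- The largest tube of `T` strictly inside `τ` containing `a`, or `{a}` if there is none. -/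
noncomputable def block (τ : Finset ℤ) (a : ℤ) : Finset ℤ :=
  if h : (C.subtubesContaining τ a).Nonempty then
    (C.subtubesContaining_finite.exists_maximal h).choose
  else {a}

lemma block_cases (τ : Finset ℤ) (a : ℤ) :
    (C.block τ a = {a} ∧ ¬ (C.subtubesContaining τ a).Nonempty) ∨
      Maximal (· ∈ C.subtubesContaining τ a) (C.block τ a) := by
  unfold block
  split_ifs with h
  exacts [Or.inr (C.subtubesContaining_finite.exists_maximal h).choose_spec, Or.inl ⟨rfl, h⟩]

lemma mem_block_self : a ∈ C.block τ a := by
  rcases C.block_cases τ a with ⟨h, -⟩ | h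
  exacts [h ▸ Finset.mem_singleton_self a, h.1.2.2]

lemma isVertex_block : C.IsVertex (C.block τ a) := by
  rcases C.block_cases τ a with ⟨h, -⟩ | h
  exacts [Or.inr ⟨a, h⟩, Or.inl h.1.1]

lemma block_ssubset (hτ : τ ∈ C.T) (ha : a ∈ τ) : C.block τ a ⊂ τ := by
  rcases C.block_cases τ a with ⟨h, -⟩ | h
  · rw [h, Finset.ssubset_iff_subset_ne]
    exact ⟨Finset.singleton_subset_iff.2 ha, (C.ne_singleton_of_mem hτ a).symm⟩
  · exact h.1.2.1

lemma subset_block (hρ : ρ ∈ C.T) (hρτ : ρ ⊂ τ) (ha : a ∈ ρ) : ρ ⊆ C.block τ a := by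
  rcases C.block_cases τ a with ⟨-, h⟩ | h
  · exact absurd ⟨ρ, hρ, hρτ, ha⟩ h
  rcases C.laminar hρ h.1.1 with hsub | hsup | hdisj
  · exact hsub
  · exact (h.eq_of_le ⟨hρ, hρτ, ha⟩ hsup).symm ▸ subset_rfl
  · exact absurd h.1.2.2 (Finset.disjoint_left.1 hdisj ha)

lemma block_eq_of_mem (hb : b ∈ C.block τ a) : C.block τ b = C.block τ a := by
  rcases C.block_cases τ a with ⟨h, -⟩ | h
  · rw [h, Finset.mem_singleton] at hb
    rw [hb, h]
  have hab : C.block τ a ⊆ C.block τ b := C.subset_block h.1.1 h.1.2.1 hb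
  rcases C.block_cases τ b with ⟨-, h'⟩ | h'
  · exact absurd ⟨_, h.1.1, h.1.2.1, hb⟩ h'
  exact _root_.le_antisymm (C.subset_block h'.1.1 h'.1.2.1 (hab C.mem_block_self)) hab

lemma disjoint_block (h : C.block τ a ≠ C.block τ b) : Disjoint (C.block τ a) (C.block τ b) :=
  Finset.disjoint_left.2 fun _ hxa hxb => h ((C.block_eq_of_mem hxa).symm.trans
    (C.block_eq_of_mem hxb))

noncomputable def blocks (τ : Finset ℤ) : Finset (Finset ℤ) := τ.image (C.block τ)

lemma mem_blocks : D ∈ C.blocks τ ↔ ∃ a ∈ τ, C.block τ a = D := by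
  simp [blocks]

lemma block_mem_blocks (ha : a ∈ τ) : C.block τ a ∈ C.blocks τ := C.mem_blocks.2 ⟨a, ha, rfl⟩

lemma block_eq_of_mem_blocks (hD : D ∈ C.blocks τ) (ha : a ∈ D) : C.block τ a = D := by
  obtain ⟨b, -, rfl⟩ := C.mem_blocks.1 hD
  exact C.block_eq_of_mem ha

lemma isVertex_of_mem_blocks (hD : D ∈ C.blocks τ) : C.IsVertex D := by
  obtain ⟨b, -, rfl⟩ := C.mem_blocks.1 hD
  exact C.isVertex_block

lemma ssubset_of_mem_blocks (hτ : τ ∈ C.T) (hD : D ∈ C.blocks τ) : D ⊂ τ := by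
  obtain ⟨b, hb, rfl⟩ := C.mem_blocks.1 hD
  exact C.block_ssubset hτ hb

lemma disjoint_of_mem_blocks (hD : D ∈ C.blocks τ) (hD' : ρ ∈ C.blocks τ) (h : D ≠ ρ) :
    Disjoint D ρ := by
  obtain ⟨a, -, rfl⟩ := C.mem_blocks.1 hD
  obtain ⟨b, -, rfl⟩ := C.mem_blocks.1 hD'
  exact C.disjoint_block h

end blocks

section adjacent

variable (C : P.TubingWithBase) {τ X D B₁ B₂ : Finset ℤ}

def Adjacent (B₁ B₂ : Finset ℤ) : Prop :=
  C.Precedes B₁ B₂ ∧ ∀ X, Relation.TransGen C.Precedes B₁ X → ¬ Relation.TransGen C.Precedes X B₂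

lemma precedes_block_of_covby {a b : ℤ} (h : P.covby a b) (hne : C.block τ a ≠ C.block τ b) :
    C.Precedes (C.block τ a) (C.block τ b) :=
  ⟨C.isVertex_block, C.isVertex_block, C.disjoint_block hne, a, C.mem_block_self, b,
    C.mem_block_self, h.1⟩

lemma exists_precedes_blocks (hτ : τ ∈ C.T) :
    ∃ B₁ ∈ C.blocks τ, ∃ B₂ ∈ C.blocks τ, C.Precedes B₁ B₂ := by
  obtain ⟨a, ha⟩ := C.nonempty_of_mem hτ
  obtain ⟨b, hb, hba⟩ := Finset.exists_of_ssubset (C.block_ssubset hτ ha)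
  have key : ∀ {c}, Relation.ReflTransGen
      (fun u v => u ∈ τ ∧ v ∈ τ ∧ (P.covby u v ∨ P.covby v u)) c b →
      C.block τ c = C.block τ b ∨ ∃ u v, u ∈ τ ∧ v ∈ τ ∧ (P.covby u v ∨ P.covby v u) ∧
        C.block τ u ≠ C.block τ v := by
    intro c h
    induction h using Relation.ReflTransGen.head_induction_on with
    | refl => exact Or.inl rfl
    | @head c d hcd _ ih =>
      by_cases hne : C.block τ c = C.block τ d
      · exact ih.imp_left hne.trans
      · exact Or.inr ⟨c, d, hcd.1, hcd.2.1, hcd.2.2, hne⟩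
  rcases key ((C.isTube hτ).1 a ha b hb) with h | ⟨u, v, hu, hv, huv, hne⟩
  · exact absurd (h ▸ C.mem_block_self) hba
  · rcases huv with huv | hvu
    · exact ⟨_, C.block_mem_blocks hu, _, C.block_mem_blocks hv, C.precedes_block_of_covby huv hne⟩
    · exact ⟨_, C.block_mem_blocks hv, _, C.block_mem_blocks hu,
        C.precedes_block_of_covby hvu (Ne.symm hne)⟩

variable {C}

lemma exists_block_between (hτ : τ ∈ C.T) (hB₁ : B₁ ∈ C.blocks τ) (hB₂ : B₂ ∈ C.blocks τ)
    (h₁ : Relation.TransGen C.Precedes B₁ X) (h₂ : Relation.TransGen C.Precedes X B₂) :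
    ∃ D ∈ C.blocks τ, Relation.TransGen C.Precedes B₁ D ∧ Relation.TransGen C.Precedes D B₂ := by
  have hX := isVertex_of_transGen_right h₁
  have hB₁τ := (C.ssubset_of_mem_blocks hτ hB₁).subset
  have hB₂τ := (C.ssubset_of_mem_blocks hτ hB₂).subset
  rcases hX.laminar (Or.inl hτ) with hXτ | hτX | hdisj
  · obtain ⟨x, hx⟩ := hX.nonempty
    have hD := C.block_mem_blocks (hXτ hx)
    have hXD : X ⊆ C.block τ x := by
      rcases hX with hXT | ⟨y, rfl⟩
      · refine C.subset_block hXT (Finset.ssubset_iff_subset_ne.2 ⟨hXτ, ?_⟩) hx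
        rintro rfl
        exact not_transGen_precedes_of_superset h₁ hB₁τ
      · rw [Finset.mem_singleton.1 hx, Finset.singleton_subset_iff]
        exact C.mem_block_self
    have hDv := C.isVertex_of_mem_blocks hD
    refine ⟨_, hD, transGen_precedes_of_subset_right h₁ hDv hXD
      (C.disjoint_of_mem_blocks hB₁ hD fun h => ?_), transGen_precedes_of_subset_left h₂ hDv hXD
      (C.disjoint_of_mem_blocks hD hB₂ fun h => ?_)⟩
    · exact not_transGen_precedes_of_subset h₁ (h ▸ hXD)
    · exact not_transGen_precedes_of_superset h₂ (h ▸ hXD)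
  · exact (not_transGen_precedes_of_superset h₁ (hB₁τ.trans hτX)).elim
  · exact (C.not_transGen_precedes τ
      ((transGen_precedes_of_subset_left h₁ (Or.inl hτ) hB₁τ hdisj.symm).trans
        (transGen_precedes_of_subset_right h₂ (Or.inl hτ) hB₂τ hdisj))).elim

lemma exists_adjacent_blocks (hτ : τ ∈ C.T) :
    ∃ B₁ ∈ C.blocks τ, ∃ B₂ ∈ C.blocks τ, C.Adjacent B₁ B₂ := by
  classical
  let between (B : Finset ℤ × Finset ℤ) := (C.blocks τ).filter fun D =>
    Relation.TransGen C.Precedes B.1 D ∧ Relation.TransGen C.Precedes D B.2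
  let S := (C.blocks τ ×ˢ C.blocks τ).filter fun B => Relation.TransGen C.Precedes B.1 B.2
  obtain ⟨B₁, hB₁, B₂, hB₂, h⟩ := C.exists_precedes_blocks hτ
  -- choose related blocks with as few blocks between them as possible
  obtain ⟨⟨B₁, B₂⟩, hB, hmin⟩ := S.exists_min_image (fun B => (between B).card)
    ⟨(B₁, B₂), Finset.mem_filter.2 ⟨Finset.mem_product.2 ⟨hB₁, hB₂⟩, .single h⟩⟩
  obtain ⟨hB, h₁₂⟩ := Finset.mem_filter.1 hB
  obtain ⟨hB₁, hB₂⟩ := Finset.mem_product.1 hB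
  have hnone : ∀ X, Relation.TransGen C.Precedes B₁ X → ¬ Relation.TransGen C.Precedes X B₂ := by
    intro X h₁ h₂
    obtain ⟨D, hD, h₁D, hD₂⟩ := exists_block_between hτ hB₁ hB₂ h₁ h₂
    have hlt : (between (B₁, D)).card < (between (B₁, B₂)).card := by
      refine Finset.card_lt_card ⟨fun E hE => ?_, fun hsub => ?_⟩
      · obtain ⟨hE, h₁E, hED⟩ := Finset.mem_filter.1 hE
        exact Finset.mem_filter.2 ⟨hE, h₁E, hED.trans hD₂⟩
      · exact C.not_transGen_precedes D (Finset.mem_filter.1 (hsub (Finset.mem_filter.2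
          ⟨hD, h₁D, hD₂⟩))).2.2
    exact absurd (hmin (B₁, D) (Finset.mem_filter.2 ⟨Finset.mem_product.2 ⟨hB₁, hD⟩, h₁D⟩))
      (not_le.2 hlt)
  refine ⟨B₁, hB₁, B₂, hB₂, ?_, hnone⟩
  obtain ⟨W, h₁W, hW₂⟩ := Relation.TransGen.tail'_iff.1 h₁₂
  rcases Relation.reflTransGen_iff_eq_or_transGen.1 h₁W with rfl | h₁W
  exacts [hW₂, (hnone W h₁W (.single hW₂)).elim]

lemma Adjacent.exists_covby (hτ : τ ∈ C.T) (hB₁ : B₁ ∈ C.blocks τ) (hB₂ : B₂ ∈ C.blocks τ)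
    (h : C.Adjacent B₁ B₂) : ∃ p ∈ B₁, ∃ q ∈ B₂, P.covby p q := by
  classical
  obtain ⟨-, -, -, p, hp, q, hq, hpq⟩ := h.1
  -- a pair `p < q` across the two blocks with the fewest elements of `τ` in between is a cover
  obtain ⟨⟨p, q⟩, hpq, hmin⟩ := ((B₁ ×ˢ B₂).filter fun pq => P.lt pq.1 pq.2).exists_min_image
    (fun pq => (P.intervalIn τ pq.1 pq.2).card)
    ⟨(p, q), Finset.mem_filter.2 ⟨Finset.mem_product.2 ⟨hp, hq⟩, hpq⟩⟩
  obtain ⟨hpq, hlt⟩ := Finset.mem_filter.1 hpq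
  obtain ⟨hp, hq⟩ := Finset.mem_product.1 hpq
  have hB₁τ := (C.ssubset_of_mem_blocks hτ hB₁).subset
  have hB₂τ := (C.ssubset_of_mem_blocks hτ hB₂).subset
  refine ⟨p, hp, q, hq, hlt, ?_⟩
  rintro ⟨m, hpm, hmq⟩
  have hmτ : m ∈ τ := (C.isTube hτ).2.1 p (hB₁τ hp) q (hB₂τ hq) m hpm.1 hmq.1
  by_cases hm₁ : m ∈ B₁
  · exact absurd (hmin (m, q) (Finset.mem_filter.2 ⟨Finset.mem_product.2 ⟨hm₁, hq⟩, hmq⟩))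
      (not_le.2 (Finset.card_lt_card (intervalIn_ssubset_of_lt_left (hB₁τ hp) hpm hlt.1)))
  by_cases hm₂ : m ∈ B₂
  · exact absurd (hmin (p, m) (Finset.mem_filter.2 ⟨Finset.mem_product.2 ⟨hp, hm₂⟩, hpm⟩))
      (not_le.2 (Finset.card_lt_card (intervalIn_ssubset_of_lt_right (hB₂τ hq) hmq hlt.1)))
  have hD := C.block_mem_blocks hmτ
  have hDv := C.isVertex_of_mem_blocks hD
  have hne : ∀ {B}, m ∉ B → C.block τ m ≠ B := fun hm h => hm (h ▸ C.mem_block_self)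
  exact h.2 _ (.single ⟨h.1.1, hDv, C.disjoint_of_mem_blocks hB₁ hD (hne hm₁).symm, p, hp, m,
    C.mem_block_self, hpm⟩) (.single ⟨hDv, h.1.2.1, C.disjoint_of_mem_blocks hD hB₂ (hne hm₂), m,
    C.mem_block_self, q, hq, hmq⟩)

end adjacent

section merge

variable {C : P.TubingWithBase} {τ ρ μ X Y V V' B₁ B₂ : Finset ℤ}

lemma IsVertex.isConnectedIn (h : C.IsVertex X) : P.IsConnectedIn X := by
  rcases h with h | ⟨a, rfl⟩
  · exact (C.isTube h).1
  · intro u hu v hv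
    rw [Finset.mem_singleton.1 hu, Finset.mem_singleton.1 hv]

lemma union_subset_of_mem_blocks (hτ : τ ∈ C.T) (hB₁ : B₁ ∈ C.blocks τ)
    (hB₂ : B₂ ∈ C.blocks τ) : B₁ ∪ B₂ ⊆ τ :=
  Finset.union_subset (C.ssubset_of_mem_blocks hτ hB₁).subset (C.ssubset_of_mem_blocks hτ hB₂).subset

lemma exists_block_of_mem_union (hB₁ : B₁ ∈ C.blocks τ) (hB₂ : B₂ ∈ C.blocks τ) {b : ℤ}
    (hb : b ∈ B₁ ∪ B₂) : ∃ B, (B = B₁ ∨ B = B₂) ∧ b ∈ B ∧ C.IsVertex B ∧ B ⊆ B₁ ∪ B₂ := by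
  rcases Finset.mem_union.1 hb with hb | hb
  exacts [⟨B₁, Or.inl rfl, hb, C.isVertex_of_mem_blocks hB₁, Finset.subset_union_left⟩,
    ⟨B₂, Or.inr rfl, hb, C.isVertex_of_mem_blocks hB₂, Finset.subset_union_right⟩]

lemma Adjacent.not_transGen (h : C.Adjacent B₁ B₂) {B B' : Finset ℤ} (hB : B = B₁ ∨ B = B₂)
    (hB' : B' = B₁ ∨ B' = B₂) (h₁ : Relation.TransGen C.Precedes B V)
    (h₂ : Relation.TransGen C.Precedes V B') : False := by
  rcases hB with rfl | rfl <;> rcases hB' with rfl | rfl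
  · exact C.not_transGen_precedes _ (h₁.trans h₂)
  · exact h.2 V h₁ h₂
  · exact C.not_transGen_precedes _ ((h₁.trans h₂).tail h.1)
  · exact C.not_transGen_precedes _ (h₁.trans h₂)

lemma Adjacent.isTube_union (hτ : τ ∈ C.T) (hB₁ : B₁ ∈ C.blocks τ) (hB₂ : B₂ ∈ C.blocks τ)
    (h : C.Adjacent B₁ B₂) : P.IsTube (B₁ ∪ B₂) := by
  have hB₁v := C.isVertex_of_mem_blocks hB₁
  have hB₂v := C.isVertex_of_mem_blocks hB₂
  have hμτ := union_subset_of_mem_blocks hτ hB₁ hB₂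
  obtain ⟨p, hp, q, hq, hpq⟩ := h.exists_covby hτ hB₁ hB₂
  refine ⟨hB₁v.isConnectedIn.union hB₂v.isConnectedIn hp hq hpq, ?_, ?_,
    fun i hi j hj => (C.isTube hτ).2.2.2 i (hμτ hi) j (hμτ hj)⟩
  · intro a ha c hc b hab hbc
    by_contra hb
    have hb₁ : b ∉ B₁ := fun h => hb (Finset.mem_union_left _ h)
    have hb₂ : b ∉ B₂ := fun h => hb (Finset.mem_union_right _ h)
    have hab' : P.lt a b := ⟨hab, by rintro rfl; exact hb ha⟩
    have hbc' : P.lt b c := ⟨hbc, by rintro rfl; exact hb hc⟩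
    -- a point strictly between the two blocks would be a vertex between them
    have into : ∀ {B}, C.IsVertex B → b ∉ B → a ∈ B → C.Precedes B {b} := fun hB hbB haB =>
      ⟨hB, C.isVertex_singleton b, Finset.disjoint_singleton_right.2 hbB, a, haB, b,
        Finset.mem_singleton_self b, hab'⟩
    have out : ∀ {B}, C.IsVertex B → b ∉ B → c ∈ B → C.Precedes {b} B := fun hB hbB hcB =>
      ⟨C.isVertex_singleton b, hB, Finset.disjoint_singleton_left.2 hbB, b,
        Finset.mem_singleton_self b, c, hcB, hbc'⟩
    rcases Finset.mem_union.1 ha with ha | ha <;> rcases Finset.mem_union.1 hc with hc | hc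
    · exact hb₁ (hB₁v.isConvexIn a ha c hc b hab hbc)
    · exact h.2 _ (.single (into hB₁v hb₁ ha)) (.single (out hB₂v hb₂ hc))
    · exact h.not_transGen (Or.inr rfl) (Or.inl rfl) (.single (into hB₂v hb₂ ha))
        (.single (out hB₁v hb₁ hc))
    · exact hb₂ (hB₂v.isConvexIn a ha c hc b hab hbc)
  · exact (Finset.card_union_of_disjoint h.1.2.2.1).symm ▸
      Nat.add_le_add hB₁v.nonempty.card_pos hB₂v.nonempty.card_pos

lemma union_laminar (hτ : τ ∈ C.T) (hB₁ : B₁ ∈ C.blocks τ) (hB₂ : B₂ ∈ C.blocks τ)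
    (hρ : ρ ∈ C.T) : B₁ ∪ B₂ ⊆ ρ ∨ ρ ⊆ B₁ ∪ B₂ ∨ Disjoint (B₁ ∪ B₂) ρ := by
  have hμτ := union_subset_of_mem_blocks hτ hB₁ hB₂
  rcases C.laminar hρ hτ with hρτ | hτρ | hdisj
  · rcases eq_or_ne ρ τ with rfl | hne
    · exact Or.inl hμτ
    obtain ⟨r, hr⟩ := C.nonempty_of_mem hρ
    have hρD := C.subset_block hρ (Finset.ssubset_iff_subset_ne.2 ⟨hρτ, hne⟩) hr
    have hD := C.block_mem_blocks (hρτ hr)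
    by_cases h₁ : C.block τ r = B₁
    · exact Or.inr (Or.inl ((h₁ ▸ hρD).trans Finset.subset_union_left))
    by_cases h₂ : C.block τ r = B₂
    · exact Or.inr (Or.inl ((h₂ ▸ hρD).trans Finset.subset_union_right))
    exact Or.inr (Or.inr (Finset.disjoint_union_left.2
      ⟨(C.disjoint_of_mem_blocks hB₁ hD (Ne.symm h₁)).mono_right hρD,
        (C.disjoint_of_mem_blocks hB₂ hD (Ne.symm h₂)).mono_right hρD⟩))
  · exact Or.inl (hμτ.trans hτρ)
  · exact Or.inr (Or.inr (hdisj.symm.mono_left hμτ))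

variable (C) in
def extend (μ : Finset ℤ) : Set (Finset ℤ) := C.T ∪ Set.range (shift n · μ)

lemma shift_mem_extend (hX : X ∈ C.extend μ) (k : ℤ) : shift n k X ∈ C.extend μ := by
  rcases hX with hX | ⟨k', rfl⟩
  exacts [Or.inl (C.shift_mem hX k), Or.inr ⟨k + k', shift_shift.symm⟩]

lemma exists_subset_shift_σ_of_mem_extend (hμσ : μ ⊆ C.σ) (hX : X ∈ C.extend μ) :
    ∃ k, X ⊆ shift n k C.σ := by
  rcases hX with hX | ⟨k, rfl⟩
  exacts [C.exists_subset_shift_σ hX, ⟨k, shift_subset_shift.2 hμσ⟩]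

lemma level_le_of_transGen_extend (hμσ : μ ⊆ C.σ)
    (h : Relation.TransGen (P.TubingRel (C.extend μ)) X Y) {k k' : ℤ}
    (hX : X ⊆ shift n k C.σ) (hY : Y ⊆ shift n k' C.σ) : k ≤ k' :=
  C.level_le_of_transGen (fun _ _ h => ⟨exists_subset_shift_σ_of_mem_extend hμσ h.1, h.2.2.2⟩)
    h hX hY

lemma laminar_extend (hμσ : μ ⊆ C.σ) (hμ : ∀ ρ ∈ C.T, μ ⊆ ρ ∨ ρ ⊆ μ ∨ Disjoint μ ρ)
    (hX : X ∈ C.extend μ) (hY : Y ∈ C.extend μ) : X ⊆ Y ∨ Y ⊆ X ∨ Disjoint X Y := by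
  have hμk : ∀ k, ∀ ρ ∈ C.T, shift n k μ ⊆ ρ ∨ ρ ⊆ shift n k μ ∨ Disjoint (shift n k μ) ρ := by
    intro k ρ hρ
    have := (hμ _ (C.shift_mem hρ (-k))).imp (shift_subset_shift (n := n) (k := k)).2
      (Or.imp (shift_subset_shift (n := n) (k := k)).2 (disjoint_shift (n := n) (k := k)).2)
    rwa [shift_shift_neg] at this
  rcases hX with hX | ⟨k, rfl⟩ <;> rcases hY with hY | ⟨k', rfl⟩
  · exact C.laminar hX hY
  · rcases hμk k' X hX with h | h | h
    exacts [Or.inr (Or.inl h), Or.inl h, Or.inr (Or.inr h.symm)]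
  · exact hμk k Y hY
  · rcases eq_or_ne k k' with rfl | hne
    · exact Or.inl subset_rfl
    · exact Or.inr (Or.inr ((C.disjoint_shift_σ hne).mono (shift_subset_shift.2 hμσ)
        (shift_subset_shift.2 hμσ)))

variable (C) in
/-- Where a path of `TubingRel (C.extend (B₁ ∪ B₂))` starting at `B₁ ∪ B₂` can be: at a tube of `T`
reached from `B₁` or `B₂` by `≺`, or already in a higher translate of `σ`. -/
def AwayFromUnion (B₁ B₂ V : Finset ℤ) : Prop :=
  (V ∈ C.T ∧ ∃ B, (B = B₁ ∨ B = B₂) ∧ Relation.TransGen C.Precedes B V) ∨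
    ∃ k, 0 < k ∧ V ⊆ shift n k C.σ

lemma Adjacent.awayFromUnion_of_tubingRel (hτ : τ ∈ C.T) (hτσ : τ ⊆ C.σ)
    (hB₁ : B₁ ∈ C.blocks τ) (hB₂ : B₂ ∈ C.blocks τ) (h : C.Adjacent B₁ B₂)
    (hV : V = B₁ ∪ B₂ ∨ C.AwayFromUnion B₁ B₂ V)
    (hVV' : P.TubingRel (C.extend (B₁ ∪ B₂)) V V') : C.AwayFromUnion B₁ B₂ V' := by
  have hμσ := (union_subset_of_mem_blocks hτ hB₁ hB₂).trans hτσ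
  have hμ₀ : B₁ ∪ B₂ ⊆ shift n 0 C.σ := by rwa [shift_zero]
  have hlev : ∀ {k k'}, V ⊆ shift n k C.σ → V' ⊆ shift n k' C.σ → k ≤ k' :=
    level_le_of_transGen_extend hμσ (.single hVV')
  obtain ⟨-, hV', hdisj, a, ha, b, hb, hab⟩ := hVV'
  rcases hV with rfl | ⟨hVT, B, hB, hBV⟩ | ⟨k, hk, hVk⟩
  · rcases hV' with hV'T | ⟨k, rfl⟩
    · obtain ⟨B, hB, haB, hBv, hBμ⟩ := exists_block_of_mem_union hB₁ hB₂ ha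
      exact Or.inl ⟨hV'T, B, hB, .single ⟨hBv, Or.inl hV'T,
        Finset.disjoint_left.2 fun x hx => hdisj x (hBμ hx), a, haB, b, hb, hab⟩⟩
    refine Or.inr ⟨k, lt_of_le_of_ne (hlev hμ₀ (shift_subset_shift.2 hμσ)) ?_,
      shift_subset_shift.2 hμσ⟩
    rintro rfl
    exact hdisj a ha (by simpa using ha)
  · rcases hV' with hV'T | ⟨k, rfl⟩
    · exact Or.inl ⟨hV'T, B, hB, hBV.tail ⟨Or.inl hVT, Or.inl hV'T,
        Finset.disjoint_left.2 hdisj, a, ha, b, hb, hab⟩⟩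
    obtain ⟨kV, hVk⟩ := C.exists_subset_shift_σ hVT
    have hBσ : B ⊆ shift n 0 C.σ := by
      rcases hB with rfl | rfl
      exacts [Finset.subset_union_left.trans hμ₀, Finset.subset_union_right.trans hμ₀]
    refine Or.inr ⟨k, lt_of_le_of_ne ((level_le_of_transGen_precedes hBV hBσ hVk).trans
      (hlev hVk (shift_subset_shift.2 hμσ))) ?_, shift_subset_shift.2 hμσ⟩
    rintro rfl
    simp only [shift_zero] at hdisj hb
    obtain ⟨B', hB', hbB', hB'v, hB'μ⟩ := exists_block_of_mem_union hB₁ hB₂ hb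
    exact h.not_transGen hB hB' hBV (.single ⟨Or.inl hVT, hB'v,
      Finset.disjoint_left.2 fun x hx hxB' => hdisj x hx (hB'μ hxB'), a, ha, b, hbB', hab⟩)
  · obtain ⟨k', hV'k⟩ := exists_subset_shift_σ_of_mem_extend hμσ hV'
    exact Or.inr ⟨k', hk.trans_le (hlev hVk hV'k), hV'k⟩

lemma Adjacent.not_transGen_extend_self (hτ : τ ∈ C.T) (hτσ : τ ⊆ C.σ)
    (hB₁ : B₁ ∈ C.blocks τ) (hB₂ : B₂ ∈ C.blocks τ) (h : C.Adjacent B₁ B₂) (hμ : B₁ ∪ B₂ ∉ C.T) :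
    ¬ Relation.TransGen (P.TubingRel (C.extend (B₁ ∪ B₂))) (B₁ ∪ B₂) (B₁ ∪ B₂) := by
  have key : ∀ {V}, Relation.TransGen (P.TubingRel (C.extend (B₁ ∪ B₂))) (B₁ ∪ B₂) V →
      C.AwayFromUnion B₁ B₂ V := by
    intro V hV
    induction hV with
    | single hV => exact h.awayFromUnion_of_tubingRel hτ hτσ hB₁ hB₂ (Or.inl rfl) hV
    | tail _ hV ih => exact h.awayFromUnion_of_tubingRel hτ hτσ hB₁ hB₂ (Or.inr ih) hV
  intro hμμ
  rcases key hμμ with ⟨hμT, -⟩ | ⟨k, hk, hμk⟩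
  · exact hμ hμT
  · obtain ⟨x, hx⟩ := (C.isVertex_of_mem_blocks hB₁).nonempty
    have hμ₀ : B₁ ∪ B₂ ⊆ shift n 0 C.σ := by
      rw [shift_zero]; exact (union_subset_of_mem_blocks hτ hB₁ hB₂).trans hτσ
    exact hk.ne (C.level_eq_of_subset ⟨x, Finset.mem_union_left _ hx⟩ hμ₀ hμk)
lemma transGen_of_transGen_extend (hρ : ρ ∈ C.T)
    (h : Relation.TransGen (P.TubingRel (C.extend μ)) ρ ρ) :
    Relation.TransGen (P.TubingRel C.T) ρ ρ ∨
      ∃ k, Relation.TransGen (P.TubingRel (C.extend μ)) (shift n k μ) (shift n k μ) := by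
  have key : ∀ {V}, Relation.TransGen (P.TubingRel (C.extend μ)) ρ V →
      (V ∈ C.T ∧ Relation.TransGen (P.TubingRel C.T) ρ V) ∨
      ∃ k, Relation.TransGen (P.TubingRel (C.extend μ)) ρ (shift n k μ) ∧
        Relation.ReflTransGen (P.TubingRel (C.extend μ)) (shift n k μ) V := by
    intro V hV
    induction hV with
    | @single V hρV =>
      rcases hρV.2.1 with hV | ⟨k, rfl⟩
      · exact Or.inl ⟨hV, .single ⟨hρ, hV, hρV.2.2⟩⟩
      · exact Or.inr ⟨k, .single hρV, .refl⟩
    | @tail V V' hρV hVV' ih =>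
      rcases ih with ⟨hV, hρV₀⟩ | ⟨k, h₁, h₂⟩
      · rcases hVV'.2.1 with hV' | ⟨k, rfl⟩
        · exact Or.inl ⟨hV', hρV₀.tail ⟨hV, hV', hVV'.2.2⟩⟩
        · exact Or.inr ⟨k, hρV.tail hVV', .refl⟩
      · exact Or.inr ⟨k, h₁, h₂.tail hVV'⟩
  rcases key h with ⟨-, h⟩ | ⟨k, h₁, h₂⟩
  exacts [Or.inl h, Or.inr ⟨k, Relation.TransGen.trans_right h₂ h₁⟩]

lemma Adjacent.isTubing_extend (hτ : τ ∈ C.T) (hτσ : τ ⊆ C.σ) (hB₁ : B₁ ∈ C.blocks τ)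
    (hB₂ : B₂ ∈ C.blocks τ) (h : C.Adjacent B₁ B₂) (hμ : B₁ ∪ B₂ ∉ C.T) :
    P.IsTubing (C.extend (B₁ ∪ B₂)) := by
  have hμσ := (union_subset_of_mem_blocks hτ hB₁ hB₂).trans hτσ
  have hshift : ∀ X ∈ C.extend (B₁ ∪ B₂), ∀ k, shift n k X ∈ C.extend (B₁ ∪ B₂) :=
    fun _ hX k => shift_mem_extend hX k
  have hμμ : ∀ k, ¬ Relation.TransGen (P.TubingRel (C.extend (B₁ ∪ B₂)))
      (shift n k (B₁ ∪ B₂)) (shift n k (B₁ ∪ B₂)) := fun k hk =>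
    h.not_transGen_extend_self hτ hτσ hB₁ hB₂ hμ
      (by simpa using transGen_tubingRel_shift hshift (-k) hk)
  refine ⟨?_, hshift, fun X hX Y hY => ?_, ?_⟩
  · rintro X (hX | ⟨k, rfl⟩)
    exacts [C.isTube hX, (h.isTube_union hτ hB₁ hB₂).shift k]
  · simpa only [Finset.disjoint_left] using
      laminar_extend hμσ (fun ρ hρ => union_laminar hτ hB₁ hB₂ hρ) hX hY
  · rintro X (hX | ⟨k, rfl⟩) hXX
    · rcases transGen_of_transGen_extend hX hXX with h' | ⟨k, hk⟩
      exacts [C.not_transGen_self hX h', hμμ k hk]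
    · exact hμμ k hXX

theorem Adjacent.eq_union (hmax : P.IsMaximalTubing C.T) (hτ : τ ∈ C.T) (hτσ : τ ⊆ C.σ)
    (hB₁ : B₁ ∈ C.blocks τ) (hB₂ : B₂ ∈ C.blocks τ) (h : C.Adjacent B₁ B₂) : τ = B₁ ∪ B₂ := by
  have hμT : B₁ ∪ B₂ ∈ C.T := by
    by_contra hμ
    refine hμ ((hmax.2 _ (h.isTubing_extend hτ hτσ hB₁ hB₂ hμ) Set.subset_union_left) ▸ ?_)
    exact Or.inr ⟨0, shift_zero⟩
  obtain ⟨p, hp, q, hq, -⟩ := h.exists_covby hτ hB₁ hB₂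
  by_contra hne
  have hsub := C.subset_block hμT (Finset.ssubset_iff_subset_ne.2
    ⟨union_subset_of_mem_blocks hτ hB₁ hB₂, Ne.symm hne⟩) (Finset.mem_union_left _ hp)
  rw [C.block_eq_of_mem_blocks hB₁ hp] at hsub
  exact Finset.disjoint_left.1 h.1.2.2.1 (hsub (Finset.mem_union_right _ hq)) hq

end merge

section split

variable (C : P.TubingWithBase) {τ B₁ B₂ : Finset ℤ}

theorem exists_eq_union_adjacent (hmax : P.IsMaximalTubing C.T) (hτ : τ ∈ C.T) (hτσ : τ ⊆ C.σ) :
    ∃ B₁ ∈ C.blocks τ, ∃ B₂ ∈ C.blocks τ, τ = B₁ ∪ B₂ ∧ C.Adjacent B₁ B₂ := by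
  obtain ⟨B₁, hB₁, B₂, hB₂, h⟩ := C.exists_adjacent_blocks hτ
  exact ⟨B₁, hB₁, B₂, hB₂, h.eq_union hmax hτ hτσ hB₁ hB₂, h⟩

variable {C}

lemma Adjacent.not_covby (h : C.Adjacent B₁ B₂) : ∀ i ∈ B₂, ∀ j ∈ B₁, ¬ P.covby i j :=
  fun i hi j hj hij => C.not_transGen_precedes B₁
    (.tail (.single h.1) ⟨h.1.2.1, h.1.1, h.1.2.2.1.symm, i, hi, j, hj, hij.1⟩)

lemma eq_of_forall_alpha_eq_zero (hmax : P.IsMaximalTubing C.T) {y : ℤ → ℝ}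
    (hy : ∀ ρ ∈ C.T, ρ ⊆ C.σ → P.alpha ρ y = 0) (hτ : τ ∈ C.T) (hτσ : τ ⊆ C.σ) :
    ∀ a ∈ τ, ∀ b ∈ τ, y a = y b := by
  induction τ using Finset.strongInduction with
  | H τ ih =>
  obtain ⟨B₁, hB₁, B₂, hB₂, hτB, h⟩ := C.exists_eq_union_adjacent hmax hτ hτσ
  have hconst : ∀ {B}, B ∈ C.blocks τ → ∀ a ∈ B, ∀ b ∈ B, y a = y b := by
    intro B hB
    rcases C.isVertex_of_mem_blocks hB with hBT | ⟨c, rfl⟩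
    · have hBτ := C.ssubset_of_mem_blocks hτ hB
      exact ih B hBτ hBT (hBτ.subset.trans hτσ)
    · intro a ha b hb
      rw [Finset.mem_singleton.1 ha, Finset.mem_singleton.1 hb]
  obtain ⟨b₁, hb₁⟩ := (C.isVertex_of_mem_blocks hB₁).nonempty
  obtain ⟨b₂, hb₂⟩ := (C.isVertex_of_mem_blocks hB₂).nonempty
  have hα := alpha_union_of_const h.1.2.2.1 h.not_covby (fun i hi => hconst hB₁ i hi b₁ hb₁)
    (fun i hi => hconst hB₂ i hi b₂ hb₂)
  rw [← hτB, hy τ hτ hτσ, eq_comm, mul_eq_zero, sub_eq_zero] at hα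
  have hb₁₂ : y b₂ = y b₁ := hα.resolve_left (Nat.cast_ne_zero.2
    (numCovers_pos (h.exists_covby hτ hB₁ hB₂)).ne')
  have hval : ∀ a ∈ τ, y a = y b₁ := by
    intro a ha
    rcases Finset.mem_union.1 (hτB ▸ ha) with ha | ha
    exacts [hconst hB₁ a ha b₁ hb₁, (hconst hB₂ a ha b₂ hb₂).trans hb₁₂]
  exact fun a ha b hb => (hval a ha).trans (hval b hb).symm

variable (C) in
open Classical in
noncomputable def subtubes (τ : Finset ℤ) : Finset (Finset ℤ) := τ.powerset.filter (· ∈ C.T)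

lemma mem_subtubes {ρ : Finset ℤ} : ρ ∈ C.subtubes τ ↔ ρ ⊆ τ ∧ ρ ∈ C.T := by
  simp [subtubes]

lemma subtubes_singleton (a : ℤ) : C.subtubes {a} = ∅ := by
  refine Finset.eq_empty_of_forall_notMem fun ρ hρ => ?_
  have h₁ := Finset.card_le_card (mem_subtubes.1 hρ).1
  have h₂ := C.one_lt_card (mem_subtubes.1 hρ).2
  rw [Finset.card_singleton] at h₁
  omega

lemma subtubes_eq_insert (hτ : τ ∈ C.T) (hB₁ : B₁ ∈ C.blocks τ) (hB₂ : B₂ ∈ C.blocks τ)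
    (hτB : τ = B₁ ∪ B₂) : C.subtubes τ = insert τ (C.subtubes B₁ ∪ C.subtubes B₂) := by
  ext ρ
  simp only [Finset.mem_insert, Finset.mem_union, mem_subtubes]
  constructor
  · rintro ⟨hρτ, hρ⟩
    rcases eq_or_ne ρ τ with rfl | hne
    · exact Or.inl rfl
    obtain ⟨r, hr⟩ := C.nonempty_of_mem hρ
    have hρr := C.subset_block hρ (Finset.ssubset_iff_subset_ne.2 ⟨hρτ, hne⟩) hr
    rcases Finset.mem_union.1 (hτB ▸ hρτ hr) with hr' | hr'
    · exact Or.inr (Or.inl ⟨C.block_eq_of_mem_blocks hB₁ hr' ▸ hρr, hρ⟩)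
    · exact Or.inr (Or.inr ⟨C.block_eq_of_mem_blocks hB₂ hr' ▸ hρr, hρ⟩)
  · rintro (rfl | ⟨hρB, hρ⟩ | ⟨hρB, hρ⟩)
    exacts [⟨subset_rfl, hτ⟩, ⟨hρB.trans (C.ssubset_of_mem_blocks hτ hB₁).subset, hρ⟩,
      ⟨hρB.trans (C.ssubset_of_mem_blocks hτ hB₂).subset, hρ⟩]

lemma card_subtubes (hmax : P.IsMaximalTubing C.T) (hτ : C.IsVertex τ) (hτσ : τ ⊆ C.σ) :
    (C.subtubes τ).card = τ.card - 1 := by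
  induction τ using Finset.strongInduction with
  | H τ ih =>
  rcases hτ with hτ | ⟨a, rfl⟩
  swap
  · simp [subtubes_singleton]
  obtain ⟨B₁, hB₁, B₂, hB₂, hτB, h⟩ := C.exists_eq_union_adjacent hmax hτ hτσ
  have hB₁τ := C.ssubset_of_mem_blocks hτ hB₁
  have hB₂τ := C.ssubset_of_mem_blocks hτ hB₂
  have hτnot : τ ∉ C.subtubes B₁ ∪ C.subtubes B₂ := by
    simp only [Finset.mem_union, mem_subtubes, not_or]
    exact ⟨fun h' => hB₁τ.not_subset h'.1, fun h' => hB₂τ.not_subset h'.1⟩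
  have hdisj : Disjoint (C.subtubes B₁) (C.subtubes B₂) := by
    refine Finset.disjoint_left.2 fun ρ h₁ h₂ => ?_
    obtain ⟨r, hr⟩ := C.nonempty_of_mem (mem_subtubes.1 h₁).2
    exact Finset.disjoint_left.1 h.1.2.2.1 ((mem_subtubes.1 h₁).1 hr) ((mem_subtubes.1 h₂).1 hr)
  rw [subtubes_eq_insert hτ hB₁ hB₂ hτB, Finset.card_insert_of_notMem hτnot,
    Finset.card_union_of_disjoint hdisj,
    ih B₁ hB₁τ (C.isVertex_of_mem_blocks hB₁) (hB₁τ.subset.trans hτσ),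
    ih B₂ hB₂τ (C.isVertex_of_mem_blocks hB₂) (hB₂τ.subset.trans hτσ), hτB,
    Finset.card_union_of_disjoint h.1.2.2.1]
  have := (C.isVertex_of_mem_blocks hB₁).nonempty.card_pos
  have := (C.isVertex_of_mem_blocks hB₂).nonempty.card_pos
  omega

end split

section linear

variable (C : P.TubingWithBase)

noncomputable def toBase (i : ℤ) : C.σ := ⟨C.base i, C.base_mem i⟩

noncomputable def alphaMap : (C.σ → ℝ) →ₗ[ℝ] (C.subtubes C.σ → ℝ) :=
  (LinearMap.pi fun ρ : C.subtubes C.σ => P.alphaLinear ρ.1) ∘ₗ LinearMap.funLeft ℝ ℝ C.toBase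

lemma alphaMap_apply (y : C.σ → ℝ) (ρ : C.subtubes C.σ) :
    C.alphaMap y ρ = P.alpha ρ (fun i => y (C.toBase i)) := rfl

lemma toBase_add (i : ℤ) : C.toBase (i + n) = C.toBase i :=
  Subtype.ext (by simpa only [one_mul] using C.base_add_mul i 1 : C.base (i + n) = C.base i)

lemma toBase_of_mem {s : ℤ} (hs : s ∈ C.σ) : C.toBase s = ⟨s, hs⟩ :=
  Subtype.ext (C.base_eq_and_level_eq_of_mem hs).1

lemma ker_alphaMap_le (hmax : P.IsMaximalTubing C.T) :
    LinearMap.ker C.alphaMap ≤ ℝ ∙ (fun _ => 1) := by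
  intro y hy
  have hy' : ∀ ρ ∈ C.T, ρ ⊆ C.σ → P.alpha ρ (fun i => y (C.toBase i)) = 0 :=
    fun ρ hρ hρσ => congrFun hy ⟨ρ, mem_subtubes.2 ⟨hρσ, hρ⟩⟩
  obtain ⟨s, hs⟩ := C.nonempty_of_mem C.σ_mem
  refine Submodule.mem_span_singleton.2 ⟨y ⟨s, hs⟩, funext fun t => ?_⟩
  have := eq_of_forall_alpha_eq_zero hmax hy' C.σ_mem subset_rfl t t.2 s hs
  simp only [C.toBase_of_mem t.2, C.toBase_of_mem hs] at this
  simp [this]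

lemma alphaMap_surjective (hmax : P.IsMaximalTubing C.T) : Function.Surjective C.alphaMap := by
  rw [← LinearMap.range_eq_top]
  refine Submodule.eq_top_of_finrank_eq (_root_.le_antisymm (Submodule.finrank_le _) ?_)
  have hker : Module.finrank ℝ (LinearMap.ker C.alphaMap) ≤ 1 :=
    (Submodule.finrank_mono (C.ker_alphaMap_le hmax)).trans
      ((finrank_span_le_card _).trans (by simp))
  have hrank := LinearMap.finrank_range_add_finrank_ker C.alphaMap
  have hsub := card_subtubes hmax (Or.inl C.σ_mem) subset_rfl
  simp only [Module.finrank_fintype_fun_eq_card, Fintype.card_coe, C.card_σ] at hrank hsub ⊢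
  omega

theorem exists_isAffineMap_alpha_eq (hmax : P.IsMaximalTubing C.T) :
    ∃ x, P.IsAffineMap x ∧ ∀ τ ∈ C.T, P.alpha τ x = (n : ℝ) ^ (2 * τ.card) := by
  set c : ℝ := (n : ℝ) ^ (2 * (n + 1))
  -- an affine `x₀`, corrected on the tubes inside `σ` by a periodic function
  let x₀ : ℤ → ℝ := fun i => -C.level i * c
  obtain ⟨y, hy⟩ := C.alphaMap_surjective hmax fun ρ => (n : ℝ) ^ (2 * ρ.1.card) - P.alpha ρ x₀
  have hx : P.IsAffineMap fun i => x₀ i + y (C.toBase i) := by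
    intro i
    simp only [x₀, C.toBase_add, by simpa using C.level_add_mul i 1]
    push_cast
    ring
  refine ⟨_, hx, C.alpha_eq_of_forall_subset_σ hx fun ρ hρ hρσ => ?_⟩
  rw [alpha_add, ← alphaMap_apply _ _ ⟨ρ, mem_subtubes.2 ⟨hρσ, hρ⟩⟩, hy]
  simp

theorem exists_eq_add_const (hmax : P.IsMaximalTubing C.T) {x y : ℤ → ℝ} (hx : P.IsAffineMap x)
    (hy : P.IsAffineMap y) (hxy : ∀ ρ ∈ C.T, ρ ⊆ C.σ → P.alpha ρ x = P.alpha ρ y) :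
    ∃ c : ℝ, ∀ i, y i = x i + c := by
  have hd : ∀ i, (y (i + n) - x (i + n)) = (y i - x i) - 0 := by
    intro i; rw [hx.apply_add, hy.apply_add]; ring
  have hd₀ : ∀ ρ ∈ C.T, ρ ⊆ C.σ → P.alpha ρ (fun i => y i - x i) = 0 := fun ρ hρ hρσ => by
    rw [alpha_sub, hxy ρ hρ hρσ, sub_self]
  obtain ⟨s, hs⟩ := C.nonempty_of_mem C.σ_mem
  refine ⟨y s - x s, fun i => ?_⟩
  -- `y - x` is `n`-periodic and constant on `σ`
  have h₁ := apply_add_mul_of_apply_add (x := fun i => y i - x i) hd (C.level i) (C.base i)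
  have h₂ := eq_of_forall_alpha_eq_zero hmax hd₀ C.σ_mem subset_rfl _ (C.base_mem i) s hs
  rw [C.base_add_level] at h₁
  linarith

end linear

end TubingWithBase

end AffinePoset

theorem affine_vertex_lemma_general {n : ℕ} (P : AffinePoset n)
    (T : Set (Finset ℤ)) (hT : P.IsMaximalTubing T)
    (σ : Finset ℤ) (hσ : σ ∈ T) (hcard : σ.card = n) :
    {x : ℤ → ℝ | P.IsAffineMap x ∧
        ∀ τ ∈ T, τ ⊆ σ → P.alpha τ x = (n : ℝ) ^ (2 * τ.card)} =
      {x : ℤ → ℝ | P.IsAffineMap x ∧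
        ∀ τ ∈ T, P.alpha τ x = (n : ℝ) ^ (2 * τ.card)} ∧
    ∃ x : ℤ → ℝ, (P.IsAffineMap x ∧
        ∀ τ ∈ T, P.alpha τ x = (n : ℝ) ^ (2 * τ.card)) ∧
      ∀ y : ℤ → ℝ, (P.IsAffineMap y ∧
          ∀ τ ∈ T, P.alpha τ y = (n : ℝ) ^ (2 * τ.card)) →
        ∃ c : ℝ, ∀ i, y i = x i + c := by
  let C : P.TubingWithBase := ⟨T, σ, hT.1, hσ, hcard⟩
  refine ⟨Set.ext fun x => ⟨fun ⟨hx, h⟩ => ⟨hx, C.alpha_eq_of_forall_subset_σ hx h⟩,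
    fun ⟨hx, h⟩ => ⟨hx, fun τ hτ _ => h τ hτ⟩⟩, ?_⟩
  obtain ⟨x, hx, hxα⟩ := C.exists_isAffineMap_alpha_eq hT
  exact ⟨x, ⟨hx, hxα⟩, fun y ⟨hy, hyα⟩ =>
    C.exists_eq_add_const hT hx hy fun ρ hρ _ => (hxα ρ hρ).trans (hyα ρ hρ).symm⟩

/-- for a maximal `n`-periodic proper tubing `T` of an affine
poset and `σ ∈ T` with `|σ| = n`, the intersection of `H_τ` over `τ ∈ T` with
`τ ⊆ σ` equals the intersection over all `τ ∈ T`, and this intersection is a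
single point of `ℝ^{P̃}/𝒞` (i.e. a single affine map up to adding constants). -/
theorem affine_vertex_lemma {n : ℕ} (hn : 0 < n) (P : AffinePoset n)
    (T : Set (Finset ℤ)) (hT : P.IsMaximalTubing T)
    (σ : Finset ℤ) (hσ : σ ∈ T) (hcard : σ.card = n) :
    {x : ℤ → ℝ | P.IsAffineMap x ∧
        ∀ τ ∈ T, τ ⊆ σ → P.alpha τ x = (n : ℝ) ^ (2 * τ.card)} =
      {x : ℤ → ℝ | P.IsAffineMap x ∧
        ∀ τ ∈ T, P.alpha τ x = (n : ℝ) ^ (2 * τ.card)} ∧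
    ∃ x : ℤ → ℝ, (P.IsAffineMap x ∧
        ∀ τ ∈ T, P.alpha τ x = (n : ℝ) ^ (2 * τ.card)) ∧
      ∀ y : ℤ → ℝ, (P.IsAffineMap y ∧
          ∀ τ ∈ T, P.alpha τ y = (n : ℝ) ^ (2 * τ.card)) →
        ∃ c : ℝ, ∀ i, y i = x i + c :=
  affine_vertex_lemma_general P T hT σ hσ hcard
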